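/- arXiv:2008.02635 — 2 statements merged into one kernel-verified Lean document; each statement's English description precedes it below -/
import Mathlib

section
/- Let C be a commutative von Neumann regular self-injective ring and M a nonsingular C-module. For every subset T ⊆ M there exists a unique idempotent ε_T ∈ C such that Ann_C(T) = C(1 − ε_T). -/
/-- An ideal of a commutative ring is essential if it meets every nonzero ideal. -/
def Ideal.IsEssential {C : Type*} [CommRing C] (a : Ideal C) : Prop :=
  ∀ c : Ideal C, c ≠ ⊥ → a ⊓ c ≠ ⊥

/-- Let `C` be a commutative von Neumann regular self-injective ring and `M` a nonsingular
`C`-module.  For every subset `T ⊆ M` there is a unique idempotent `ε_T ∈ C` with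
`Ann_C(T) = C(1 - ε_T)`. -/
theorem exists_unique_support_idempotent {C M : Type*} [CommRing C]
    [AddCommGroup M] [Module C M]
    (hvnr : ∀ a : C, ∃ b : C, a * b * a = a)
    (hinj : Module.Injective C C)
    (hns : ∀ m : M, (∃ a : Ideal C, a.IsEssential ∧ ∀ α ∈ a, α • m = 0) → m = 0)
    (T : Set M) :
    ∃! ε : C, IsIdempotentElem ε ∧
      ∀ c : C, (∀ t ∈ T, c • t = 0) ↔ ∃ d : C, c = d * (1 - ε) := by
  classical
  -- C is reduced
  have hred : ∀ x : C, x * x = 0 → x = 0 := by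
    intro x hx
    obtain ⟨b, hb⟩ := hvnr x
    calc x = x * b * x := hb.symm
      _ = b * (x * x) := by ring
      _ = 0 := by rw [hx, mul_zero]
  -- the annihilator of T
  let I : Ideal C :=
    { carrier := {c | ∀ t ∈ T, c • t = 0}
      add_mem' := by
        intro a b ha hb t ht
        rw [add_smul, ha t ht, hb t ht, add_zero]
      zero_mem' := by intro t ht; rw [zero_smul]
      smul_mem' := by
        intro c x hx t ht
        rw [smul_eq_mul, mul_smul, hx t ht, smul_zero] }
  have hImem : ∀ c : C, c ∈ I ↔ ∀ t ∈ T, c • t = 0 := fun _ => Iff.rfl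
  -- the annihilator of I in C
  let J : Ideal C := Submodule.annihilator I
  have hJmem : ∀ c : C, c ∈ J ↔ ∀ x ∈ I, c * x = 0 := by
    intro c
    rw [Submodule.mem_annihilator]
    simp [smul_eq_mul]
  -- I ⊔ J is essential
  have hess : (I ⊔ J).IsEssential := by
    intro K hK
    obtain ⟨x, hxK, hx0⟩ := Submodule.ne_bot_iff K |>.mp hK
    rw [Submodule.ne_bot_iff]
    by_cases h : ∀ i ∈ I, i * x = 0
    · have hxJ : x ∈ J := (hJmem x).2 fun i hi => by rw [mul_comm]; exact h i hi
      exact ⟨x, ⟨Submodule.mem_sup_right hxJ, hxK⟩, hx0⟩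
    · push_neg at h
      obtain ⟨i, hi, hix⟩ := h
      refine ⟨i * x, ⟨Submodule.mem_sup_left ?_, ?_⟩, hix⟩
      · rw [mul_comm]; exact I.mul_mem_left x hi
      · exact K.mul_mem_left i hxK
  -- C is nonsingular relative to the essential ideal I ⊔ J
  have hCns : ∀ x : C, (∀ α ∈ (I ⊔ J : Ideal C), α * x = 0) → x = 0 := by
    intro x hx
    by_contra hx0
    by_cases h : ∀ i ∈ I, i * x = 0
    · have hxJ : x ∈ J := (hJmem x).2 fun i hi => by rw [mul_comm]; exact h i hi
      exact hx0 (hred x (hx x (Submodule.mem_sup_right hxJ)))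
    · push_neg at h
      obtain ⟨i, hi, hix⟩ := h
      have hmem : i * x ∈ (I ⊔ J : Ideal C) := by
        apply Submodule.mem_sup_left
        rw [mul_comm]; exact I.mul_mem_left x hi
      have h1 : (i * x) * x = 0 := hx _ hmem
      have h2 : (i * x) * (i * x) = 0 := by
        calc (i * x) * (i * x) = i * ((i * x) * x) := by ring
          _ = 0 := by rw [h1, mul_zero]
      exact hix (hred _ h2)
  -- anything annihilating J lies in I (uses nonsingularity of M)
  have hAnnJ : ∀ c : C, (∀ j ∈ J, j * c = 0) → c ∈ I := by
    intro c hc t ht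
    apply hns
    refine ⟨I ⊔ J, hess, ?_⟩
    intro α hα
    obtain ⟨i, hi, j, hj, rfl⟩ := Submodule.mem_sup.mp hα
    have h1 : (i + j) • (c • t) = ((i : C) * c) • t + ((j : C) * c) • t := by
      rw [smul_smul, add_mul, add_smul]
    rw [h1, hc j hj, zero_smul, add_zero, mul_comm, mul_smul, hi t ht, smul_zero]
  -- build the projection map on I ⊔ J
  have hdisj : I ⊓ J = ⊥ := by
    rw [eq_bot_iff]
    rintro x ⟨hxI, hxJ⟩
    have : x * x = 0 := (hJmem x).1 hxJ x hxI
    simpa using hred x this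
  set φ : (I × J) →ₗ[C] C := (Submodule.subtype I).coprod (Submodule.subtype J) with hφ
  have hφinj : Function.Injective φ := by
    rw [← LinearMap.ker_eq_bot, eq_bot_iff]
    rintro ⟨i, j⟩ hij
    have h0 : (i : C) + (j : C) = 0 := hij
    have hiIJ : (i : C) ∈ I ⊓ J := by
      refine ⟨i.2, ?_⟩
      have : (i : C) = -(j : C) := by linear_combination h0
      rw [this]; exact J.neg_mem j.2
    have hi0 : (i : C) = 0 := by rw [hdisj] at hiIJ; simpa using hiIJ
    have hj0 : (j : C) = 0 := by rw [hi0, zero_add] at h0; exact h0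
    simp only [Submodule.mem_bot, Prod.ext_iff]
    exact ⟨Subtype.ext hi0, Subtype.ext hj0⟩
  have hrange : LinearMap.range φ = I ⊔ J := (Submodule.sup_eq_range I J).symm
  set ψ := LinearEquiv.ofInjective φ hφinj with hψ
  set ρ := LinearEquiv.ofEq _ _ hrange.symm with hρ
  set f : ↥(I ⊔ J : Ideal C) →ₗ[C] C :=
    (Submodule.subtype I).comp ((LinearMap.fst C I J).comp
      (ψ.symm.toLinearMap.comp ρ.toLinearMap)) with hfdef
  have hf : ∀ (i j : C) (hi : i ∈ I) (hj : j ∈ J) (h : i + j ∈ (I ⊔ J : Ideal C)),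
      f ⟨i + j, h⟩ = i := by
    intro i j hi hj h
    have h1 : ψ (⟨i, hi⟩, ⟨j, hj⟩) = ρ ⟨i + j, h⟩ := by
      apply Subtype.ext
      simp [hψ, hρ, hφ, LinearEquiv.ofInjective_apply]
    have h2 : ψ.symm (ρ ⟨i + j, h⟩) = (⟨i, hi⟩, ⟨j, hj⟩) := by
      rw [← h1, LinearEquiv.symm_apply_apply]
    simp [hfdef, h2]
  -- extend f to all of C using injectivity
  obtain ⟨g, hg⟩ := hinj.out (Submodule.subtype (I ⊔ J : Ideal C))
    (Submodule.injective_subtype _) f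
  set e : C := g 1 with he
  have hkey : ∀ (i j : C), i ∈ I → j ∈ J → (i + j) * e = i := by
    intro i j hi hj
    have hmem : i + j ∈ (I ⊔ J : Ideal C) := Submodule.add_mem_sup hi hj
    have h2 : g ((Submodule.subtype _) ⟨i + j, hmem⟩) = f ⟨i + j, hmem⟩ := hg _
    rw [Submodule.subtype_apply, hf i j hi hj hmem] at h2
    calc (i + j) * e = (i + j) • g 1 := by rw [smul_eq_mul, he]
      _ = g ((i + j) • (1 : C)) := (g.map_smul _ _).symm
      _ = g (i + j) := by rw [smul_eq_mul, mul_one]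
      _ = i := h2
  have heI : ∀ i ∈ I, i * e = i := by
    intro i hi
    have := hkey i 0 hi J.zero_mem
    simpa using this
  have heJ : ∀ j ∈ J, j * e = 0 := by
    intro j hj
    have := hkey 0 j I.zero_mem hj
    simpa using this
  have hee : e * e = e := by
    have h0 : e * e - e = 0 := by
      apply hCns
      intro α hα
      obtain ⟨i, hi, j, hj, rfl⟩ := Submodule.mem_sup.mp hα
      have h1 : (i + j) * e = i := hkey i j hi hj
      have h2 : ((i : C) + j) * (e * e - e) = (((i : C) + j) * e) * e - ((i : C) + j) * e := by
        ring
      rw [h2, h1, heI i hi, sub_self]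
    linear_combination h0
  have heT : e ∈ I := hAnnJ e heJ
  refine ⟨1 - e, ⟨?_, ?_⟩, ?_⟩
  · show (1 - e) * (1 - e) = 1 - e
    linear_combination hee
  · intro c
    constructor
    · intro hc
      refine ⟨c, ?_⟩
      rw [sub_sub_cancel]
      exact (heI c hc).symm
    · rintro ⟨d, rfl⟩
      intro t ht
      rw [sub_sub_cancel, mul_smul, heT t ht, smul_zero]
  · rintro ε' ⟨hidem', hε'⟩
    have hann' : ∀ t ∈ T, (1 - ε') • t = 0 := (hε' (1 - ε')).2 ⟨1, by ring⟩
    have hA : (1 - ε') * e = 1 - ε' := heI _ hann'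
    obtain ⟨d, hd⟩ := (hε' e).1 heT
    have hB : e * (1 - ε') = e := by
      have h2 : (1 - ε') * (1 - ε') = 1 - ε' := hidem'.one_sub
      calc e * (1 - ε') = d * (1 - ε') * (1 - ε') := by rw [hd]
        _ = d * ((1 - ε') * (1 - ε')) := by ring
        _ = d * (1 - ε') := by rw [h2]
        _ = e := hd.symm
    have hfin : 1 - ε' = e := by rw [← hA, mul_comm, hB]
    linear_combination -hfin
end

section
/- Let J be a (linear) Jordan algebra over a ring containing 1/2 and suppose every element of J is von Neumann regular in the sense that for each a there is y with U_a y = a. If J is a domain in the sense that U_a b = 0 with a, b ≠ 0 never occurs, then every nonzero element a of J is invertible: there exists y with U_a y = a and U_a y² = 1 in the unital hull (equivalently, U_a is surjective and injective). -/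
/-- The quadratic operator `U_a b = 2 a(ab) - a² b` of a linear Jordan algebra. -/
def jordanU {J : Type*} [NonUnitalNonAssocCommRing J] (a b : J) : J :=
  2 • (a * (a * b)) - (a * a) * b

lemma two_nsmul_inj {Φ J : Type*} [CommRing Φ] [Invertible (2 : Φ)]
    [NonUnitalNonAssocCommRing J]
    [Module Φ J] (x y : J) (h : (2:ℕ) • x = (2:ℕ) • y) : x = y := by
  have h' : (2:Φ) • x = (2:Φ) • y := by
    have hx := Nat.cast_smul_eq_nsmul Φ 2 x
    have hy := Nat.cast_smul_eq_nsmul Φ 2 y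
    norm_num at hx hy
    rw [hx, hy]; exact h
  calc x = ⅟(2:Φ) • ((2:Φ) • x) := (invOf_smul_smul _ x).symm
    _ = ⅟(2:Φ) • ((2:Φ) • y) := by rw [h']
    _ = y := invOf_smul_smul _ y

lemma jordanJ {J : Type*} [NonUnitalNonAssocCommRing J] [IsCommJordan J] (x y : J) :
    (x * y) * (x * x) - x * (y * (x * x)) = 0 :=
  sub_eq_zero.mpr (IsCommJordan.lmul_comm_rmul_rmul x y)

lemma jordanT {Φ J : Type*} [CommRing Φ] [Invertible (2 : Φ)]
    [NonUnitalNonAssocCommRing J] [IsCommJordan J]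
    [Module Φ J] [IsScalarTower Φ J J] [SMulCommClass Φ J J] (x z w y : J) :
    (w * x) * (y * z) + (w * y) * (x * z) + (w * z) * (x * y)
      - w * (y * (x * z)) - x * (y * (w * z)) - z * (y * (w * x)) = 0 := by
  apply two_nsmul_inj (Φ := Φ)
  have h1 := jordanJ (x + z + w) y
  have h2 := jordanJ (x + z) y
  have h3 := jordanJ (x + w) y
  have h4 := jordanJ (z + w) y
  have h5 := jordanJ x y
  have h6 := jordanJ z y
  have h7 := jordanJ w y
  have key : (2:ℕ) • ((w * x) * (y * z) + (w * y) * (x * z) + (w * z) * (x * y)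
      - w * (y * (x * z)) - x * (y * (w * z)) - z * (y * (w * x))) =
      (((x + z + w) * y) * ((x + z + w) * (x + z + w)) - (x + z + w) * (y * ((x + z + w) * (x + z + w))))
      - (((x + z) * y) * ((x + z) * (x + z)) - (x + z) * (y * ((x + z) * (x + z))))
      - (((x + w) * y) * ((x + w) * (x + w)) - (x + w) * (y * ((x + w) * (x + w))))
      - (((z + w) * y) * ((z + w) * (z + w)) - (z + w) * (y * ((z + w) * (z + w))))
      + ((x * y) * (x * x) - x * (y * (x * x)))
      + ((z * y) * (z * z) - z * (y * (z * z)))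
      + ((w * y) * (w * w) - w * (y * (w * w))) := by
    simp only [two_smul, mul_add, add_mul, mul_sub, sub_mul]
    simp only [mul_comm]
    abel
  rw [key, h1, h2, h3, h4, h5, h6, h7]
  simp

lemma jordanU_sub {J : Type*} [NonUnitalNonAssocCommRing J] (a x y : J) :
    jordanU a x - jordanU a y = jordanU a (x - y) := by
  simp only [jordanU, mul_sub, smul_sub]
  abel

lemma jordanU_zero {J : Type*} [NonUnitalNonAssocCommRing J] (a : J) : jordanU a 0 = 0 := by
  simp [jordanU]

set_option maxHeartbeats 16000000 in
set_option maxRecDepth 1000000 in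
lemma fund {Φ J : Type*} [CommRing Φ] [Invertible (2 : Φ)]
    [NonUnitalNonAssocCommRing J] [IsCommJordan J]
    [Module Φ J] [IsScalarTower Φ J J] [SMulCommClass Φ J J] (a b c : J) :
    jordanU (jordanU a b) c = jordanU a (jordanU b (jordanU a c)) := by
  apply two_nsmul_inj (Φ := Φ)
  have h1 : ((a * (a * (b * (b * c)))) * (a * a) - a * ((a * (b * (b * c))) * (a * a))) = 0 := jordanJ a (a * (b * (b * c)))
  have h2 : ((a * (a * (c * (b * b)))) * (a * a) - a * ((a * (c * (b * b))) * (a * a))) = 0 := jordanJ a (a * (c * (b * b)))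
  have h3 : ((a * (b * (a * (b * c)))) * (a * a) - a * ((b * (a * (b * c))) * (a * a))) = 0 := jordanJ a (b * (a * (b * c)))
  have h4 : ((a * (b * (b * (a * c)))) * (a * a) - a * ((b * (b * (a * c))) * (a * a))) = 0 := jordanJ a (b * (b * (a * c)))
  have h5 : ((a * (b * (c * (a * b)))) * (a * a) - a * ((b * (c * (a * b))) * (a * a))) = 0 := jordanJ a (b * (c * (a * b)))
  have h6 : ((a * (c * (a * (b * b)))) * (a * a) - a * ((c * (a * (b * b))) * (a * a))) = 0 := jordanJ a (c * (a * (b * b)))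
  have h7 : ((a * ((a * b) * (b * c))) * (a * a) - a * (((a * b) * (b * c)) * (a * a))) = 0 := jordanJ a ((a * b) * (b * c))
  have h8 : ((c * b) * ((a * (a * (a * a))) * b) + (c * (a * (a * (a * a)))) * (b * b) + (c * b) * (b * (a * (a * (a * a)))) - c * ((a * (a * (a * a))) * (b * b)) - b * ((a * (a * (a * a))) * (c * b)) - b * ((a * (a * (a * a))) * (c * b))) = 0 := jordanT (Φ := Φ) b b c (a * (a * (a * a)))
  have h9 : ((c * b) * (((a * a) * (a * a)) * b) + (c * ((a * a) * (a * a))) * (b * b) + (c * b) * (b * ((a * a) * (a * a))) - c * (((a * a) * (a * a)) * (b * b)) - b * (((a * a) * (a * a)) * (c * b)) - b * (((a * a) * (a * a)) * (c * b))) = 0 := jordanT (Φ := Φ) b b c ((a * a) * (a * a))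
  have h10 : ((c * a) * ((a * (a * (a * b))) * b) + (c * (a * (a * (a * b)))) * (a * b) + (c * b) * (a * (a * (a * (a * b)))) - c * ((a * (a * (a * b))) * (a * b)) - a * ((a * (a * (a * b))) * (c * b)) - b * ((a * (a * (a * b))) * (c * a))) = 0 := jordanT (Φ := Φ) a b c (a * (a * (a * b)))
  have h11 : ((c * a) * (((a * a) * (a * b)) * b) + (c * ((a * a) * (a * b))) * (a * b) + (c * b) * (a * ((a * a) * (a * b))) - c * (((a * a) * (a * b)) * (a * b)) - a * (((a * a) * (a * b)) * (c * b)) - b * (((a * a) * (a * b)) * (c * a))) = 0 := jordanT (Φ := Φ) a b c ((a * a) * (a * b))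
  have h12 : (((a * b) * b) * ((a * (a * a)) * c) + ((a * b) * (a * (a * a))) * (b * c) + ((a * b) * c) * (b * (a * (a * a))) - (a * b) * ((a * (a * a)) * (b * c)) - b * ((a * (a * a)) * ((a * b) * c)) - c * ((a * (a * a)) * ((a * b) * b))) = 0 := jordanT (Φ := Φ) b c (a * b) (a * (a * a))
  have h13 : (((a * a) * b) * ((a * (a * b)) * c) + ((a * a) * (a * (a * b))) * (b * c) + ((a * a) * c) * (b * (a * (a * b))) - (a * a) * ((a * (a * b)) * (b * c)) - b * ((a * (a * b)) * ((a * a) * c)) - c * ((a * (a * b)) * ((a * a) * b))) = 0 := jordanT (Φ := Φ) b c (a * a) (a * (a * b))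
  have h14 : (((a * a) * b) * ((b * (a * a)) * c) + ((a * a) * (b * (a * a))) * (b * c) + ((a * a) * c) * (b * (b * (a * a))) - (a * a) * ((b * (a * a)) * (b * c)) - b * ((b * (a * a)) * ((a * a) * c)) - c * ((b * (a * a)) * ((a * a) * b))) = 0 := jordanT (Φ := Φ) b c (a * a) (b * (a * a))
  have h15 : (((a * (a * b)) * b) * ((a * a) * c) + ((a * (a * b)) * (a * a)) * (b * c) + ((a * (a * b)) * c) * (b * (a * a)) - (a * (a * b)) * ((a * a) * (b * c)) - b * ((a * a) * ((a * (a * b)) * c)) - c * ((a * a) * ((a * (a * b)) * b))) = 0 := jordanT (Φ := Φ) b c (a * (a * b)) (a * a)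
  have h16 : (((b * b) * a) * ((a * (a * a)) * c) + ((b * b) * (a * (a * a))) * (a * c) + ((b * b) * c) * (a * (a * (a * a))) - (b * b) * ((a * (a * a)) * (a * c)) - a * ((a * (a * a)) * ((b * b) * c)) - c * ((a * (a * a)) * ((b * b) * a))) = 0 := jordanT (Φ := Φ) a c (b * b) (a * (a * a))
  have h17 : (((b * b) * c) * ((a * a) * (a * a)) + ((b * b) * (a * a)) * (c * (a * a)) + ((b * b) * (a * a)) * (c * (a * a)) - (b * b) * ((a * a) * (c * (a * a))) - c * ((a * a) * ((b * b) * (a * a))) - (a * a) * ((a * a) * ((b * b) * c))) = 0 := jordanT (Φ := Φ) c (a * a) (b * b) (a * a)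
  have h18 : ((c * a) * ((a * (a * (b * b))) * a) + (c * (a * (a * (b * b)))) * (a * a) + (c * a) * (a * (a * (a * (b * b)))) - c * ((a * (a * (b * b))) * (a * a)) - a * ((a * (a * (b * b))) * (c * a)) - a * ((a * (a * (b * b))) * (c * a))) = 0 := jordanT (Φ := Φ) a a c (a * (a * (b * b)))
  have h19 : ((c * a) * ((b * (a * (a * b))) * a) + (c * (b * (a * (a * b)))) * (a * a) + (c * a) * (a * (b * (a * (a * b)))) - c * ((b * (a * (a * b))) * (a * a)) - a * ((b * (a * (a * b))) * (c * a)) - a * ((b * (a * (a * b))) * (c * a))) = 0 := jordanT (Φ := Φ) a a c (b * (a * (a * b)))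
  have h20 : ((c * a) * (((a * a) * (b * b)) * a) + (c * ((a * a) * (b * b))) * (a * a) + (c * a) * (a * ((a * a) * (b * b))) - c * (((a * a) * (b * b)) * (a * a)) - a * (((a * a) * (b * b)) * (c * a)) - a * (((a * a) * (b * b)) * (c * a))) = 0 := jordanT (Φ := Φ) a a c ((a * a) * (b * b))
  have h21 : ((c * a) * (((a * b) * (a * b)) * a) + (c * ((a * b) * (a * b))) * (a * a) + (c * a) * (a * ((a * b) * (a * b))) - c * (((a * b) * (a * b)) * (a * a)) - a * (((a * b) * (a * b)) * (c * a)) - a * (((a * b) * (a * b)) * (c * a))) = 0 := jordanT (Φ := Φ) a a c ((a * b) * (a * b))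
  have h22 : (((a * b) * a) * ((a * (a * b)) * c) + ((a * b) * (a * (a * b))) * (a * c) + ((a * b) * c) * (a * (a * (a * b))) - (a * b) * ((a * (a * b)) * (a * c)) - a * ((a * (a * b)) * ((a * b) * c)) - c * ((a * (a * b)) * ((a * b) * a))) = 0 := jordanT (Φ := Φ) a c (a * b) (a * (a * b))
  have h23 : (((a * b) * a) * ((b * (a * a)) * c) + ((a * b) * (b * (a * a))) * (a * c) + ((a * b) * c) * (a * (b * (a * a))) - (a * b) * ((b * (a * a)) * (a * c)) - a * ((b * (a * a)) * ((a * b) * c)) - c * ((b * (a * a)) * ((a * b) * a))) = 0 := jordanT (Φ := Φ) a c (a * b) (b * (a * a))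
  have h24 : (((a * (b * b)) * a) * ((a * a) * c) + ((a * (b * b)) * (a * a)) * (a * c) + ((a * (b * b)) * c) * (a * (a * a)) - (a * (b * b)) * ((a * a) * (a * c)) - a * ((a * a) * ((a * (b * b)) * c)) - c * ((a * a) * ((a * (b * b)) * a))) = 0 := jordanT (Φ := Φ) a c (a * (b * b)) (a * a)
  have h25 : (((a * a) * a) * ((a * (b * b)) * c) + ((a * a) * (a * (b * b))) * (a * c) + ((a * a) * c) * (a * (a * (b * b))) - (a * a) * ((a * (b * b)) * (a * c)) - a * ((a * (b * b)) * ((a * a) * c)) - c * ((a * (b * b)) * ((a * a) * a))) = 0 := jordanT (Φ := Φ) a c (a * a) (a * (b * b))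
  have h26 : (((a * a) * a) * ((b * (a * b)) * c) + ((a * a) * (b * (a * b))) * (a * c) + ((a * a) * c) * (a * (b * (a * b))) - (a * a) * ((b * (a * b)) * (a * c)) - a * ((b * (a * b)) * ((a * a) * c)) - c * ((b * (a * b)) * ((a * a) * a))) = 0 := jordanT (Φ := Φ) a c (a * a) (b * (a * b))
  have h27 : (((a * (a * b)) * a) * ((a * b) * c) + ((a * (a * b)) * (a * b)) * (a * c) + ((a * (a * b)) * c) * (a * (a * b)) - (a * (a * b)) * ((a * b) * (a * c)) - a * ((a * b) * ((a * (a * b)) * c)) - c * ((a * b) * ((a * (a * b)) * a))) = 0 := jordanT (Φ := Φ) a c (a * (a * b)) (a * b)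
  have h28 : (((a * (a * a)) * a) * ((b * b) * c) + ((a * (a * a)) * (b * b)) * (a * c) + ((a * (a * a)) * c) * (a * (b * b)) - (a * (a * a)) * ((b * b) * (a * c)) - a * ((b * b) * ((a * (a * a)) * c)) - c * ((b * b) * ((a * (a * a)) * a))) = 0 := jordanT (Φ := Φ) a c (a * (a * a)) (b * b)
  have h29 : (((a * b) * c) * ((a * a) * (a * b)) + ((a * b) * (a * a)) * (c * (a * b)) + ((a * b) * (a * b)) * (c * (a * a)) - (a * b) * ((a * a) * (c * (a * b))) - c * ((a * a) * ((a * b) * (a * b))) - (a * b) * ((a * a) * ((a * b) * c))) = 0 := jordanT (Φ := Φ) c (a * b) (a * b) (a * a)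
  have h30 : (((a * b) * c) * ((a * b) * (a * a)) + ((a * b) * (a * b)) * (c * (a * a)) + ((a * b) * (a * a)) * (c * (a * b)) - (a * b) * ((a * b) * (c * (a * a))) - c * ((a * b) * ((a * b) * (a * a))) - (a * a) * ((a * b) * ((a * b) * c))) = 0 := jordanT (Φ := Φ) c (a * a) (a * b) (a * b)
  have h31 : (((a * a) * c) * ((b * b) * (a * a)) + ((a * a) * (b * b)) * (c * (a * a)) + ((a * a) * (a * a)) * (c * (b * b)) - (a * a) * ((b * b) * (c * (a * a))) - c * ((b * b) * ((a * a) * (a * a))) - (a * a) * ((b * b) * ((a * a) * c))) = 0 := jordanT (Φ := Φ) c (a * a) (a * a) (b * b)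
  have h32 : ((b * a) * (((a * a) * (a * c)) * b) + (b * ((a * a) * (a * c))) * (a * b) + (b * b) * (a * ((a * a) * (a * c))) - b * (((a * a) * (a * c)) * (a * b)) - a * (((a * a) * (a * c)) * (b * b)) - b * (((a * a) * (a * c)) * (b * a))) = 0 := jordanT (Φ := Φ) a b b ((a * a) * (a * c))
  have h33 : (((a * c) * b) * ((a * (a * a)) * b) + ((a * c) * (a * (a * a))) * (b * b) + ((a * c) * b) * (b * (a * (a * a))) - (a * c) * ((a * (a * a)) * (b * b)) - b * ((a * (a * a)) * ((a * c) * b)) - b * ((a * (a * a)) * ((a * c) * b))) = 0 := jordanT (Φ := Φ) b b (a * c) (a * (a * a))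
  have h34 : (((a * a) * b) * ((a * (a * c)) * b) + ((a * a) * (a * (a * c))) * (b * b) + ((a * a) * b) * (b * (a * (a * c))) - (a * a) * ((a * (a * c)) * (b * b)) - b * ((a * (a * c)) * ((a * a) * b)) - b * ((a * (a * c)) * ((a * a) * b))) = 0 := jordanT (Φ := Φ) b b (a * a) (a * (a * c))
  have h35 : (((a * a) * b) * ((c * (a * a)) * b) + ((a * a) * (c * (a * a))) * (b * b) + ((a * a) * b) * (b * (c * (a * a))) - (a * a) * ((c * (a * a)) * (b * b)) - b * ((c * (a * a)) * ((a * a) * b)) - b * ((c * (a * a)) * ((a * a) * b))) = 0 := jordanT (Φ := Φ) b b (a * a) (c * (a * a))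
  have h36 : (((a * (a * c)) * b) * ((a * a) * b) + ((a * (a * c)) * (a * a)) * (b * b) + ((a * (a * c)) * b) * (b * (a * a)) - (a * (a * c)) * ((a * a) * (b * b)) - b * ((a * a) * ((a * (a * c)) * b)) - b * ((a * a) * ((a * (a * c)) * b))) = 0 := jordanT (Φ := Φ) b b (a * (a * c)) (a * a)
  have h37 : (((b * c) * a) * ((a * (a * a)) * b) + ((b * c) * (a * (a * a))) * (a * b) + ((b * c) * b) * (a * (a * (a * a))) - (b * c) * ((a * (a * a)) * (a * b)) - a * ((a * (a * a)) * ((b * c) * b)) - b * ((a * (a * a)) * ((b * c) * a))) = 0 := jordanT (Φ := Φ) a b (b * c) (a * (a * a))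
  have h38 : (((b * c) * b) * ((a * a) * (a * a)) + ((b * c) * (a * a)) * (b * (a * a)) + ((b * c) * (a * a)) * (b * (a * a)) - (b * c) * ((a * a) * (b * (a * a))) - b * ((a * a) * ((b * c) * (a * a))) - (a * a) * ((a * a) * ((b * c) * b))) = 0 := jordanT (Φ := Φ) b (a * a) (b * c) (a * a)
  have h39 : ((b * a) * ((a * (a * (b * c))) * a) + (b * (a * (a * (b * c)))) * (a * a) + (b * a) * (a * (a * (a * (b * c)))) - b * ((a * (a * (b * c))) * (a * a)) - a * ((a * (a * (b * c))) * (b * a)) - a * ((a * (a * (b * c))) * (b * a))) = 0 := jordanT (Φ := Φ) a a b (a * (a * (b * c)))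
  have h40 : ((b * a) * ((a * (b * (a * c))) * a) + (b * (a * (b * (a * c)))) * (a * a) + (b * a) * (a * (a * (b * (a * c)))) - b * ((a * (b * (a * c))) * (a * a)) - a * ((a * (b * (a * c))) * (b * a)) - a * ((a * (b * (a * c))) * (b * a))) = 0 := jordanT (Φ := Φ) a a b (a * (b * (a * c)))
  have h41 : ((b * a) * ((a * (c * (a * b))) * a) + (b * (a * (c * (a * b)))) * (a * a) + (b * a) * (a * (a * (c * (a * b)))) - b * ((a * (c * (a * b))) * (a * a)) - a * ((a * (c * (a * b))) * (b * a)) - a * ((a * (c * (a * b))) * (b * a))) = 0 := jordanT (Φ := Φ) a a b (a * (c * (a * b)))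
  have h42 : ((b * a) * ((b * (a * (a * c))) * a) + (b * (b * (a * (a * c)))) * (a * a) + (b * a) * (a * (b * (a * (a * c)))) - b * ((b * (a * (a * c))) * (a * a)) - a * ((b * (a * (a * c))) * (b * a)) - a * ((b * (a * (a * c))) * (b * a))) = 0 := jordanT (Φ := Φ) a a b (b * (a * (a * c)))
  have h43 : ((b * a) * ((c * (a * (a * b))) * a) + (b * (c * (a * (a * b)))) * (a * a) + (b * a) * (a * (c * (a * (a * b)))) - b * ((c * (a * (a * b))) * (a * a)) - a * ((c * (a * (a * b))) * (b * a)) - a * ((c * (a * (a * b))) * (b * a))) = 0 := jordanT (Φ := Φ) a a b (c * (a * (a * b)))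
  have h44 : ((b * a) * (((a * a) * (b * c)) * a) + (b * ((a * a) * (b * c))) * (a * a) + (b * a) * (a * ((a * a) * (b * c))) - b * (((a * a) * (b * c)) * (a * a)) - a * (((a * a) * (b * c)) * (b * a)) - a * (((a * a) * (b * c)) * (b * a))) = 0 := jordanT (Φ := Φ) a a b ((a * a) * (b * c))
  have h45 : ((b * a) * (((a * b) * (a * c)) * a) + (b * ((a * b) * (a * c))) * (a * a) + (b * a) * (a * ((a * b) * (a * c))) - b * (((a * b) * (a * c)) * (a * a)) - a * (((a * b) * (a * c)) * (b * a)) - a * (((a * b) * (a * c)) * (b * a))) = 0 := jordanT (Φ := Φ) a a b ((a * b) * (a * c))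
  have h46 : (((a * c) * a) * ((a * (a * b)) * b) + ((a * c) * (a * (a * b))) * (a * b) + ((a * c) * b) * (a * (a * (a * b))) - (a * c) * ((a * (a * b)) * (a * b)) - a * ((a * (a * b)) * ((a * c) * b)) - b * ((a * (a * b)) * ((a * c) * a))) = 0 := jordanT (Φ := Φ) a b (a * c) (a * (a * b))
  have h47 : (((a * c) * a) * ((b * (a * a)) * b) + ((a * c) * (b * (a * a))) * (a * b) + ((a * c) * b) * (a * (b * (a * a))) - (a * c) * ((b * (a * a)) * (a * b)) - a * ((b * (a * a)) * ((a * c) * b)) - b * ((b * (a * a)) * ((a * c) * a))) = 0 := jordanT (Φ := Φ) a b (a * c) (b * (a * a))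
  have h48 : (((a * b) * a) * ((a * (a * c)) * b) + ((a * b) * (a * (a * c))) * (a * b) + ((a * b) * b) * (a * (a * (a * c))) - (a * b) * ((a * (a * c)) * (a * b)) - a * ((a * (a * c)) * ((a * b) * b)) - b * ((a * (a * c)) * ((a * b) * a))) = 0 := jordanT (Φ := Φ) a b (a * b) (a * (a * c))
  have h49 : (((a * b) * a) * ((c * (a * a)) * b) + ((a * b) * (c * (a * a))) * (a * b) + ((a * b) * b) * (a * (c * (a * a))) - (a * b) * ((c * (a * a)) * (a * b)) - a * ((c * (a * a)) * ((a * b) * b)) - b * ((c * (a * a)) * ((a * b) * a))) = 0 := jordanT (Φ := Φ) a b (a * b) (c * (a * a))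
  have h50 : (((a * (b * c)) * a) * ((a * a) * b) + ((a * (b * c)) * (a * a)) * (a * b) + ((a * (b * c)) * b) * (a * (a * a)) - (a * (b * c)) * ((a * a) * (a * b)) - a * ((a * a) * ((a * (b * c)) * b)) - b * ((a * a) * ((a * (b * c)) * a))) = 0 := jordanT (Φ := Φ) a b (a * (b * c)) (a * a)
  have h51 : (((b * (a * c)) * a) * ((a * a) * b) + ((b * (a * c)) * (a * a)) * (a * b) + ((b * (a * c)) * b) * (a * (a * a)) - (b * (a * c)) * ((a * a) * (a * b)) - a * ((a * a) * ((b * (a * c)) * b)) - b * ((a * a) * ((b * (a * c)) * a))) = 0 := jordanT (Φ := Φ) a b (b * (a * c)) (a * a)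
  have h52 : (((c * (a * b)) * a) * ((a * a) * b) + ((c * (a * b)) * (a * a)) * (a * b) + ((c * (a * b)) * b) * (a * (a * a)) - (c * (a * b)) * ((a * a) * (a * b)) - a * ((a * a) * ((c * (a * b)) * b)) - b * ((a * a) * ((c * (a * b)) * a))) = 0 := jordanT (Φ := Φ) a b (c * (a * b)) (a * a)
  have h53 : (((a * a) * a) * ((a * (b * c)) * b) + ((a * a) * (a * (b * c))) * (a * b) + ((a * a) * b) * (a * (a * (b * c))) - (a * a) * ((a * (b * c)) * (a * b)) - a * ((a * (b * c)) * ((a * a) * b)) - b * ((a * (b * c)) * ((a * a) * a))) = 0 := jordanT (Φ := Φ) a b (a * a) (a * (b * c))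
  have h54 : (((a * a) * a) * ((b * (a * c)) * b) + ((a * a) * (b * (a * c))) * (a * b) + ((a * a) * b) * (a * (b * (a * c))) - (a * a) * ((b * (a * c)) * (a * b)) - a * ((b * (a * c)) * ((a * a) * b)) - b * ((b * (a * c)) * ((a * a) * a))) = 0 := jordanT (Φ := Φ) a b (a * a) (b * (a * c))
  have h55 : (((a * a) * a) * ((c * (a * b)) * b) + ((a * a) * (c * (a * b))) * (a * b) + ((a * a) * b) * (a * (c * (a * b))) - (a * a) * ((c * (a * b)) * (a * b)) - a * ((c * (a * b)) * ((a * a) * b)) - b * ((c * (a * b)) * ((a * a) * a))) = 0 := jordanT (Φ := Φ) a b (a * a) (c * (a * b))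
  have h56 : (((a * (a * b)) * a) * ((a * c) * b) + ((a * (a * b)) * (a * c)) * (a * b) + ((a * (a * b)) * b) * (a * (a * c)) - (a * (a * b)) * ((a * c) * (a * b)) - a * ((a * c) * ((a * (a * b)) * b)) - b * ((a * c) * ((a * (a * b)) * a))) = 0 := jordanT (Φ := Φ) a b (a * (a * b)) (a * c)
  have h57 : (((a * (a * a)) * a) * ((b * c) * b) + ((a * (a * a)) * (b * c)) * (a * b) + ((a * (a * a)) * b) * (a * (b * c)) - (a * (a * a)) * ((b * c) * (a * b)) - a * ((b * c) * ((a * (a * a)) * b)) - b * ((b * c) * ((a * (a * a)) * a))) = 0 := jordanT (Φ := Φ) a b (a * (a * a)) (b * c)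
  have h58 : (((a * c) * b) * ((a * a) * (a * b)) + ((a * c) * (a * a)) * (b * (a * b)) + ((a * c) * (a * b)) * (b * (a * a)) - (a * c) * ((a * a) * (b * (a * b))) - b * ((a * a) * ((a * c) * (a * b))) - (a * b) * ((a * a) * ((a * c) * b))) = 0 := jordanT (Φ := Φ) b (a * b) (a * c) (a * a)
  have h59 : (((a * c) * b) * ((a * b) * (a * a)) + ((a * c) * (a * b)) * (b * (a * a)) + ((a * c) * (a * a)) * (b * (a * b)) - (a * c) * ((a * b) * (b * (a * a))) - b * ((a * b) * ((a * c) * (a * a))) - (a * a) * ((a * b) * ((a * c) * b))) = 0 := jordanT (Φ := Φ) b (a * a) (a * c) (a * b)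
  have h60 : (((a * b) * b) * ((a * c) * (a * a)) + ((a * b) * (a * c)) * (b * (a * a)) + ((a * b) * (a * a)) * (b * (a * c)) - (a * b) * ((a * c) * (b * (a * a))) - b * ((a * c) * ((a * b) * (a * a))) - (a * a) * ((a * c) * ((a * b) * b))) = 0 := jordanT (Φ := Φ) b (a * a) (a * b) (a * c)
  have h61 : (((a * a) * b) * ((b * c) * (a * a)) + ((a * a) * (b * c)) * (b * (a * a)) + ((a * a) * (a * a)) * (b * (b * c)) - (a * a) * ((b * c) * (b * (a * a))) - b * ((b * c) * ((a * a) * (a * a))) - (a * a) * ((b * c) * ((a * a) * b))) = 0 := jordanT (Φ := Φ) b (a * a) (a * a) (b * c)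
  have h62 : (((b * c) * a) * ((a * (a * b)) * a) + ((b * c) * (a * (a * b))) * (a * a) + ((b * c) * a) * (a * (a * (a * b))) - (b * c) * ((a * (a * b)) * (a * a)) - a * ((a * (a * b)) * ((b * c) * a)) - a * ((a * (a * b)) * ((b * c) * a))) = 0 := jordanT (Φ := Φ) a a (b * c) (a * (a * b))
  have h63 : (((b * c) * a) * ((b * (a * a)) * a) + ((b * c) * (b * (a * a))) * (a * a) + ((b * c) * a) * (a * (b * (a * a))) - (b * c) * ((b * (a * a)) * (a * a)) - a * ((b * (a * a)) * ((b * c) * a)) - a * ((b * (a * a)) * ((b * c) * a))) = 0 := jordanT (Φ := Φ) a a (b * c) (b * (a * a))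
  have h64 : (((b * c) * a) * ((a * a) * (a * b)) + ((b * c) * (a * a)) * (a * (a * b)) + ((b * c) * (a * b)) * (a * (a * a)) - (b * c) * ((a * a) * (a * (a * b))) - a * ((a * a) * ((b * c) * (a * b))) - (a * b) * ((a * a) * ((b * c) * a))) = 0 := jordanT (Φ := Φ) a (a * b) (b * c) (a * a)
  have h65 : (((a * (a * b)) * a) * (a * (b * c)) + ((a * (a * b)) * a) * (a * (b * c)) + ((a * (a * b)) * (b * c)) * (a * a) - (a * (a * b)) * (a * (a * (b * c))) - a * (a * ((a * (a * b)) * (b * c))) - (b * c) * (a * ((a * (a * b)) * a))) = 0 := jordanT (Φ := Φ) a (b * c) (a * (a * b)) a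
  have h66 : (((a * (a * a)) * a) * (b * (b * c)) + ((a * (a * a)) * b) * (a * (b * c)) + ((a * (a * a)) * (b * c)) * (a * b) - (a * (a * a)) * (b * (a * (b * c))) - a * (b * ((a * (a * a)) * (b * c))) - (b * c) * (b * ((a * (a * a)) * a))) = 0 := jordanT (Φ := Φ) a (b * c) (a * (a * a)) b
  have h67 : (((b * c) * (a * a)) * (a * (a * b)) + ((b * c) * a) * ((a * a) * (a * b)) + ((b * c) * (a * b)) * ((a * a) * a) - (b * c) * (a * ((a * a) * (a * b))) - (a * a) * (a * ((b * c) * (a * b))) - (a * b) * (a * ((b * c) * (a * a)))) = 0 := jordanT (Φ := Φ) (a * a) (a * b) (b * c) a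
  have h68 : (((b * c) * (a * a)) * (b * (a * a)) + ((b * c) * b) * ((a * a) * (a * a)) + ((b * c) * (a * a)) * ((a * a) * b) - (b * c) * (b * ((a * a) * (a * a))) - (a * a) * (b * ((b * c) * (a * a))) - (a * a) * (b * ((b * c) * (a * a)))) = 0 := jordanT (Φ := Φ) (a * a) (a * a) (b * c) b
  have h69 : (((b * b) * a) * ((a * (a * c)) * a) + ((b * b) * (a * (a * c))) * (a * a) + ((b * b) * a) * (a * (a * (a * c))) - (b * b) * ((a * (a * c)) * (a * a)) - a * ((a * (a * c)) * ((b * b) * a)) - a * ((a * (a * c)) * ((b * b) * a))) = 0 := jordanT (Φ := Φ) a a (b * b) (a * (a * c))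
  have h70 : (((b * b) * a) * ((c * (a * a)) * a) + ((b * b) * (c * (a * a))) * (a * a) + ((b * b) * a) * (a * (c * (a * a))) - (b * b) * ((c * (a * a)) * (a * a)) - a * ((c * (a * a)) * ((b * b) * a)) - a * ((c * (a * a)) * ((b * b) * a))) = 0 := jordanT (Φ := Φ) a a (b * b) (c * (a * a))
  have h71 : (((a * (a * a)) * a) * (c * (b * b)) + ((a * (a * a)) * c) * (a * (b * b)) + ((a * (a * a)) * (b * b)) * (a * c) - (a * (a * a)) * (c * (a * (b * b))) - a * (c * ((a * (a * a)) * (b * b))) - (b * b) * (c * ((a * (a * a)) * a))) = 0 := jordanT (Φ := Φ) a (b * b) (a * (a * a)) c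
  have h72 : (((b * b) * (a * a)) * (a * (a * c)) + ((b * b) * a) * ((a * a) * (a * c)) + ((b * b) * (a * c)) * ((a * a) * a) - (b * b) * (a * ((a * a) * (a * c))) - (a * a) * (a * ((b * b) * (a * c))) - (a * c) * (a * ((b * b) * (a * a)))) = 0 := jordanT (Φ := Φ) (a * a) (a * c) (b * b) a
  have h73 : (((b * b) * (a * a)) * (c * (a * a)) + ((b * b) * c) * ((a * a) * (a * a)) + ((b * b) * (a * a)) * ((a * a) * c) - (b * b) * (c * ((a * a) * (a * a))) - (a * a) * (c * ((b * b) * (a * a))) - (a * a) * (c * ((b * b) * (a * a)))) = 0 := jordanT (Φ := Φ) (a * a) (a * a) (b * b) c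
  have h74 : (((b * (b * c)) * a) * ((a * a) * a) + ((b * (b * c)) * (a * a)) * (a * a) + ((b * (b * c)) * a) * (a * (a * a)) - (b * (b * c)) * ((a * a) * (a * a)) - a * ((a * a) * ((b * (b * c)) * a)) - a * ((a * a) * ((b * (b * c)) * a))) = 0 := jordanT (Φ := Φ) a a (b * (b * c)) (a * a)
  have h75 : (((c * (b * b)) * a) * ((a * a) * a) + ((c * (b * b)) * (a * a)) * (a * a) + ((c * (b * b)) * a) * (a * (a * a)) - (c * (b * b)) * ((a * a) * (a * a)) - a * ((a * a) * ((c * (b * b)) * a)) - a * ((a * a) * ((c * (b * b)) * a))) = 0 := jordanT (Φ := Φ) a a (c * (b * b)) (a * a)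
  have h76 : (((b * (b * c)) * a) * (a * (a * a)) + ((b * (b * c)) * a) * (a * (a * a)) + ((b * (b * c)) * (a * a)) * (a * a) - (b * (b * c)) * (a * (a * (a * a))) - a * (a * ((b * (b * c)) * (a * a))) - (a * a) * (a * ((b * (b * c)) * a))) = 0 := jordanT (Φ := Φ) a (a * a) (b * (b * c)) a
  have h77 : (((c * (b * b)) * a) * (a * (a * a)) + ((c * (b * b)) * a) * (a * (a * a)) + ((c * (b * b)) * (a * a)) * (a * a) - (c * (b * b)) * (a * (a * (a * a))) - a * (a * ((c * (b * b)) * (a * a))) - (a * a) * (a * ((c * (b * b)) * a))) = 0 := jordanT (Φ := Φ) a (a * a) (c * (b * b)) a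
  have h78 : (((a * c) * a) * ((a * (b * b)) * a) + ((a * c) * (a * (b * b))) * (a * a) + ((a * c) * a) * (a * (a * (b * b))) - (a * c) * ((a * (b * b)) * (a * a)) - a * ((a * (b * b)) * ((a * c) * a)) - a * ((a * (b * b)) * ((a * c) * a))) = 0 := jordanT (Φ := Φ) a a (a * c) (a * (b * b))
  have h79 : (((a * c) * a) * ((b * (a * b)) * a) + ((a * c) * (b * (a * b))) * (a * a) + ((a * c) * a) * (a * (b * (a * b))) - (a * c) * ((b * (a * b)) * (a * a)) - a * ((b * (a * b)) * ((a * c) * a)) - a * ((b * (a * b)) * ((a * c) * a))) = 0 := jordanT (Φ := Φ) a a (a * c) (b * (a * b))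
  have h80 : (((a * b) * a) * ((a * (b * c)) * a) + ((a * b) * (a * (b * c))) * (a * a) + ((a * b) * a) * (a * (a * (b * c))) - (a * b) * ((a * (b * c)) * (a * a)) - a * ((a * (b * c)) * ((a * b) * a)) - a * ((a * (b * c)) * ((a * b) * a))) = 0 := jordanT (Φ := Φ) a a (a * b) (a * (b * c))
  have h81 : (((a * b) * a) * ((b * (a * c)) * a) + ((a * b) * (b * (a * c))) * (a * a) + ((a * b) * a) * (a * (b * (a * c))) - (a * b) * ((b * (a * c)) * (a * a)) - a * ((b * (a * c)) * ((a * b) * a)) - a * ((b * (a * c)) * ((a * b) * a))) = 0 := jordanT (Φ := Φ) a a (a * b) (b * (a * c))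
  have h82 : (((a * b) * a) * ((c * (a * b)) * a) + ((a * b) * (c * (a * b))) * (a * a) + ((a * b) * a) * (a * (c * (a * b))) - (a * b) * ((c * (a * b)) * (a * a)) - a * ((c * (a * b)) * ((a * b) * a)) - a * ((c * (a * b)) * ((a * b) * a))) = 0 := jordanT (Φ := Φ) a a (a * b) (c * (a * b))
  have h83 : (((b * (a * c)) * a) * ((a * b) * a) + ((b * (a * c)) * (a * b)) * (a * a) + ((b * (a * c)) * a) * (a * (a * b)) - (b * (a * c)) * ((a * b) * (a * a)) - a * ((a * b) * ((b * (a * c)) * a)) - a * ((a * b) * ((b * (a * c)) * a))) = 0 := jordanT (Φ := Φ) a a (b * (a * c)) (a * b)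
  have h84 : (((a * (b * b)) * a) * ((a * c) * a) + ((a * (b * b)) * (a * c)) * (a * a) + ((a * (b * b)) * a) * (a * (a * c)) - (a * (b * b)) * ((a * c) * (a * a)) - a * ((a * c) * ((a * (b * b)) * a)) - a * ((a * c) * ((a * (b * b)) * a))) = 0 := jordanT (Φ := Φ) a a (a * (b * b)) (a * c)
  have h85 : (((b * (a * (b * c))) * a) * (a * a) + ((b * (a * (b * c))) * a) * (a * a) + ((b * (a * (b * c))) * a) * (a * a) - (b * (a * (b * c))) * (a * (a * a)) - a * (a * ((b * (a * (b * c))) * a)) - a * (a * ((b * (a * (b * c))) * a))) = 0 := jordanT (Φ := Φ) a a (b * (a * (b * c))) a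
  have h86 : (((b * (b * (a * c))) * a) * (a * a) + ((b * (b * (a * c))) * a) * (a * a) + ((b * (b * (a * c))) * a) * (a * a) - (b * (b * (a * c))) * (a * (a * a)) - a * (a * ((b * (b * (a * c))) * a)) - a * (a * ((b * (b * (a * c))) * a))) = 0 := jordanT (Φ := Φ) a a (b * (b * (a * c))) a
  have h87 : ((((a * c) * (b * b)) * a) * (a * a) + (((a * c) * (b * b)) * a) * (a * a) + (((a * c) * (b * b)) * a) * (a * a) - ((a * c) * (b * b)) * (a * (a * a)) - a * (a * (((a * c) * (b * b)) * a)) - a * (a * (((a * c) * (b * b)) * a))) = 0 := jordanT (Φ := Φ) a a ((a * c) * (b * b)) a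
  have h88 : (((a * a) * a) * ((b * (b * c)) * a) + ((a * a) * (b * (b * c))) * (a * a) + ((a * a) * a) * (a * (b * (b * c))) - (a * a) * ((b * (b * c)) * (a * a)) - a * ((b * (b * c)) * ((a * a) * a)) - a * ((b * (b * c)) * ((a * a) * a))) = 0 := jordanT (Φ := Φ) a a (a * a) (b * (b * c))
  have h89 : (((a * a) * a) * ((c * (b * b)) * a) + ((a * a) * (c * (b * b))) * (a * a) + ((a * a) * a) * (a * (c * (b * b))) - (a * a) * ((c * (b * b)) * (a * a)) - a * ((c * (b * b)) * ((a * a) * a)) - a * ((c * (b * b)) * ((a * a) * a))) = 0 := jordanT (Φ := Φ) a a (a * a) (c * (b * b))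
  have h90 : (((a * (a * b)) * a) * ((b * c) * a) + ((a * (a * b)) * (b * c)) * (a * a) + ((a * (a * b)) * a) * (a * (b * c)) - (a * (a * b)) * ((b * c) * (a * a)) - a * ((b * c) * ((a * (a * b)) * a)) - a * ((b * c) * ((a * (a * b)) * a))) = 0 := jordanT (Φ := Φ) a a (a * (a * b)) (b * c)
  have h91 : (((a * c) * a) * ((a * b) * (a * b)) + ((a * c) * (a * b)) * (a * (a * b)) + ((a * c) * (a * b)) * (a * (a * b)) - (a * c) * ((a * b) * (a * (a * b))) - a * ((a * b) * ((a * c) * (a * b))) - (a * b) * ((a * b) * ((a * c) * a))) = 0 := jordanT (Φ := Φ) a (a * b) (a * c) (a * b)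
  have h92 : (((a * (b * b)) * a) * (a * (a * c)) + ((a * (b * b)) * a) * (a * (a * c)) + ((a * (b * b)) * (a * c)) * (a * a) - (a * (b * b)) * (a * (a * (a * c))) - a * (a * ((a * (b * b)) * (a * c))) - (a * c) * (a * ((a * (b * b)) * a))) = 0 := jordanT (Φ := Φ) a (a * c) (a * (b * b)) a
  have h93 : (((b * (a * b)) * a) * (a * (a * c)) + ((b * (a * b)) * a) * (a * (a * c)) + ((b * (a * b)) * (a * c)) * (a * a) - (b * (a * b)) * (a * (a * (a * c))) - a * (a * ((b * (a * b)) * (a * c))) - (a * c) * (a * ((b * (a * b)) * a))) = 0 := jordanT (Φ := Φ) a (a * c) (b * (a * b)) a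
  have h94 : (((a * c) * a) * ((b * b) * (a * a)) + ((a * c) * (b * b)) * (a * (a * a)) + ((a * c) * (a * a)) * (a * (b * b)) - (a * c) * ((b * b) * (a * (a * a))) - a * ((b * b) * ((a * c) * (a * a))) - (a * a) * ((b * b) * ((a * c) * a))) = 0 := jordanT (Φ := Φ) a (a * a) (a * c) (b * b)
  have h95 : (((a * b) * a) * ((a * c) * (a * b)) + ((a * b) * (a * c)) * (a * (a * b)) + ((a * b) * (a * b)) * (a * (a * c)) - (a * b) * ((a * c) * (a * (a * b))) - a * ((a * c) * ((a * b) * (a * b))) - (a * b) * ((a * c) * ((a * b) * a))) = 0 := jordanT (Φ := Φ) a (a * b) (a * b) (a * c)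
  have h96 : (((a * (b * c)) * a) * (a * (a * b)) + ((a * (b * c)) * a) * (a * (a * b)) + ((a * (b * c)) * (a * b)) * (a * a) - (a * (b * c)) * (a * (a * (a * b))) - a * (a * ((a * (b * c)) * (a * b))) - (a * b) * (a * ((a * (b * c)) * a))) = 0 := jordanT (Φ := Φ) a (a * b) (a * (b * c)) a
  have h97 : (((b * (a * c)) * a) * (a * (a * b)) + ((b * (a * c)) * a) * (a * (a * b)) + ((b * (a * c)) * (a * b)) * (a * a) - (b * (a * c)) * (a * (a * (a * b))) - a * (a * ((b * (a * c)) * (a * b))) - (a * b) * (a * ((b * (a * c)) * a))) = 0 := jordanT (Φ := Φ) a (a * b) (b * (a * c)) a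
  have h98 : (((a * b) * a) * ((b * c) * (a * a)) + ((a * b) * (b * c)) * (a * (a * a)) + ((a * b) * (a * a)) * (a * (b * c)) - (a * b) * ((b * c) * (a * (a * a))) - a * ((b * c) * ((a * b) * (a * a))) - (a * a) * ((b * c) * ((a * b) * a))) = 0 := jordanT (Φ := Φ) a (a * a) (a * b) (b * c)
  have h99 : (((a * c) * (a * b)) * (a * (a * b)) + ((a * c) * a) * ((a * b) * (a * b)) + ((a * c) * (a * b)) * ((a * b) * a) - (a * c) * (a * ((a * b) * (a * b))) - (a * b) * (a * ((a * c) * (a * b))) - (a * b) * (a * ((a * c) * (a * b)))) = 0 := jordanT (Φ := Φ) (a * b) (a * b) (a * c) a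
  have h100 : (((a * c) * (a * a)) * (b * (a * b)) + ((a * c) * b) * ((a * a) * (a * b)) + ((a * c) * (a * b)) * ((a * a) * b) - (a * c) * (b * ((a * a) * (a * b))) - (a * a) * (b * ((a * c) * (a * b))) - (a * b) * (b * ((a * c) * (a * a)))) = 0 := jordanT (Φ := Φ) (a * a) (a * b) (a * c) b
  have h101 : (((a * b) * (a * a)) * (c * (a * b)) + ((a * b) * c) * ((a * a) * (a * b)) + ((a * b) * (a * b)) * ((a * a) * c) - (a * b) * (c * ((a * a) * (a * b))) - (a * a) * (c * ((a * b) * (a * b))) - (a * b) * (c * ((a * b) * (a * a)))) = 0 := jordanT (Φ := Φ) (a * a) (a * b) (a * b) c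
  have h102 : ((c * b) * (a * b) + (c * a) * (b * b) + (c * b) * (b * a) - c * (a * (b * b)) - b * (a * (c * b)) - b * (a * (c * b))) = 0 := jordanT (Φ := Φ) b b c a
  have h103 : ((c * a) * (b * b) + (c * b) * (a * b) + (c * b) * (a * b) - c * (b * (a * b)) - a * (b * (c * b)) - b * (b * (c * a))) = 0 := jordanT (Φ := Φ) a b c b
  have h104 : ((b * a) * (c * b) + (b * c) * (a * b) + (b * b) * (a * c) - b * (c * (a * b)) - a * (c * (b * b)) - b * (c * (b * a))) = 0 := jordanT (Φ := Φ) a b b c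
  have h105 : ((c * a) * (a * b) + (c * a) * (a * b) + (c * b) * (a * a) - c * (a * (a * b)) - a * (a * (c * b)) - b * (a * (c * a))) = 0 := jordanT (Φ := Φ) a b c a
  have h106 : ((c * a) * (b * a) + (c * b) * (a * a) + (c * a) * (a * b) - c * (b * (a * a)) - a * (b * (c * a)) - a * (b * (c * a))) = 0 := jordanT (Φ := Φ) a a c b
  have h107 : ((b * a) * (c * a) + (b * c) * (a * a) + (b * a) * (a * c) - b * (c * (a * a)) - a * (c * (b * a)) - a * (c * (b * a))) = 0 := jordanT (Φ := Φ) a a b c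
  have h108 : ((b * a) * (a * b) + (b * a) * (a * b) + (b * b) * (a * a) - b * (a * (a * b)) - a * (a * (b * b)) - b * (a * (b * a))) = 0 := jordanT (Φ := Φ) a b b a
  have h109 : ((b * a) * (b * a) + (b * b) * (a * a) + (b * a) * (a * b) - b * (b * (a * a)) - a * (b * (b * a)) - a * (b * (b * a))) = 0 := jordanT (Φ := Φ) a a b b
  have h110 : ((c * a) * ((a * b) * b) + (c * (a * b)) * (a * b) + (c * b) * (a * (a * b)) - c * ((a * b) * (a * b)) - a * ((a * b) * (c * b)) - b * ((a * b) * (c * a))) = 0 := jordanT (Φ := Φ) a b c (a * b)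
  have h111 : (((b * b) * a) * (a * c) + ((b * b) * a) * (a * c) + ((b * b) * c) * (a * a) - (b * b) * (a * (a * c)) - a * (a * ((b * b) * c)) - c * (a * ((b * b) * a))) = 0 := jordanT (Φ := Φ) a c (b * b) a
  have h112 : ((c * a) * ((b * b) * a) + (c * (b * b)) * (a * a) + (c * a) * (a * (b * b)) - c * ((b * b) * (a * a)) - a * ((b * b) * (c * a)) - a * ((b * b) * (c * a))) = 0 := jordanT (Φ := Φ) a a c (b * b)
  have h113 : (((a * b) * a) * (b * c) + ((a * b) * b) * (a * c) + ((a * b) * c) * (a * b) - (a * b) * (b * (a * c)) - a * (b * ((a * b) * c)) - c * (b * ((a * b) * a))) = 0 := jordanT (Φ := Φ) a c (a * b) b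
  have h114 : ((b * a) * ((a * c) * b) + (b * (a * c)) * (a * b) + (b * b) * (a * (a * c)) - b * ((a * c) * (a * b)) - a * ((a * c) * (b * b)) - b * ((a * c) * (b * a))) = 0 := jordanT (Φ := Φ) a b b (a * c)
  have h115 : (((a * c) * b) * (a * b) + ((a * c) * a) * (b * b) + ((a * c) * b) * (b * a) - (a * c) * (a * (b * b)) - b * (a * ((a * c) * b)) - b * (a * ((a * c) * b))) = 0 := jordanT (Φ := Φ) b b (a * c) a
  have h116 : (((b * c) * a) * (a * b) + ((b * c) * a) * (a * b) + ((b * c) * b) * (a * a) - (b * c) * (a * (a * b)) - a * (a * ((b * c) * b)) - b * (a * ((b * c) * a))) = 0 := jordanT (Φ := Φ) a b (b * c) a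
  have h117 : ((b * a) * ((b * c) * a) + (b * (b * c)) * (a * a) + (b * a) * (a * (b * c)) - b * ((b * c) * (a * a)) - a * ((b * c) * (b * a)) - a * ((b * c) * (b * a))) = 0 := jordanT (Φ := Φ) a a b (b * c)
  have h118 : (((a * c) * a) * (b * b) + ((a * c) * b) * (a * b) + ((a * c) * b) * (a * b) - (a * c) * (b * (a * b)) - a * (b * ((a * c) * b)) - b * (b * ((a * c) * a))) = 0 := jordanT (Φ := Φ) a b (a * c) b
  have h119 : (((a * b) * a) * (c * b) + ((a * b) * c) * (a * b) + ((a * b) * b) * (a * c) - (a * b) * (c * (a * b)) - a * (c * ((a * b) * b)) - b * (c * ((a * b) * a))) = 0 := jordanT (Φ := Φ) a b (a * b) c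
  have h120 : (((b * c) * a) * (b * a) + ((b * c) * b) * (a * a) + ((b * c) * a) * (a * b) - (b * c) * (b * (a * a)) - a * (b * ((b * c) * a)) - a * (b * ((b * c) * a))) = 0 := jordanT (Φ := Φ) a a (b * c) b
  have h121 : (((b * b) * a) * (c * a) + ((b * b) * c) * (a * a) + ((b * b) * a) * (a * c) - (b * b) * (c * (a * a)) - a * (c * ((b * b) * a)) - a * (c * ((b * b) * a))) = 0 := jordanT (Φ := Φ) a a (b * b) c
  have h122 : ((a * c) * (a * a) - a * (c * (a * a))) = 0 := jordanJ a c
  have h123 : ((c * a) * (a * a) + (c * a) * (a * a) + (c * a) * (a * a) - c * (a * (a * a)) - a * (a * (c * a)) - a * (a * (c * a))) = 0 := jordanT (Φ := Φ) a a c a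
  have h124 : ((a * b) * (a * a) - a * (b * (a * a))) = 0 := jordanJ a b
  have h125 : ((b * a) * (a * a) + (b * a) * (a * a) + (b * a) * (a * a) - b * (a * (a * a)) - a * (a * (b * a)) - a * (a * (b * a))) = 0 := jordanT (Φ := Φ) a a b a
  have h126 : ((a * (b * c)) * (a * a) - a * ((b * c) * (a * a))) = 0 := jordanJ a (b * c)
  have h127 : (((a * b) * a) * (a * c) + ((a * b) * a) * (a * c) + ((a * b) * c) * (a * a) - (a * b) * (a * (a * c)) - a * (a * ((a * b) * c)) - c * (a * ((a * b) * a))) = 0 := jordanT (Φ := Φ) a c (a * b) a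
  have h128 : (((b * c) * a) * (a * a) + ((b * c) * a) * (a * a) + ((b * c) * a) * (a * a) - (b * c) * (a * (a * a)) - a * (a * ((b * c) * a)) - a * (a * ((b * c) * a))) = 0 := jordanT (Φ := Φ) a a (b * c) a
  have h129 : (((a * c) * a) * (b * a) + ((a * c) * b) * (a * a) + ((a * c) * a) * (a * b) - (a * c) * (b * (a * a)) - a * (b * ((a * c) * a)) - a * (b * ((a * c) * a))) = 0 := jordanT (Φ := Φ) a a (a * c) b
  have h130 : (((a * b) * a) * (c * a) + ((a * b) * c) * (a * a) + ((a * b) * a) * (a * c) - (a * b) * (c * (a * a)) - a * (c * ((a * b) * a)) - a * (c * ((a * b) * a))) = 0 := jordanT (Φ := Φ) a a (a * b) c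
  have h131 : ((a * (b * b)) * (a * a) - a * ((b * b) * (a * a))) = 0 := jordanJ a (b * b)
  have h132 : (((a * b) * a) * (a * b) + ((a * b) * a) * (a * b) + ((a * b) * b) * (a * a) - (a * b) * (a * (a * b)) - a * (a * ((a * b) * b)) - b * (a * ((a * b) * a))) = 0 := jordanT (Φ := Φ) a b (a * b) a
  have h133 : (((b * b) * a) * (a * a) + ((b * b) * a) * (a * a) + ((b * b) * a) * (a * a) - (b * b) * (a * (a * a)) - a * (a * ((b * b) * a)) - a * (a * ((b * b) * a))) = 0 := jordanT (Φ := Φ) a a (b * b) a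
  have h134 : (((a * b) * a) * (b * a) + ((a * b) * b) * (a * a) + ((a * b) * a) * (a * b) - (a * b) * (b * (a * a)) - a * (b * ((a * b) * a)) - a * (b * ((a * b) * a))) = 0 := jordanT (Φ := Φ) a a (a * b) b
  have h135 : ((a * (b * (b * c))) * (a * a) - a * ((b * (b * c)) * (a * a))) = 0 := jordanJ a (b * (b * c))
  have h136 : ((a * (c * (b * b))) * (a * a) - a * ((c * (b * b)) * (a * a))) = 0 := jordanJ a (c * (b * b))
  have h137 : (((a * a) * a) * ((b * b) * c) + ((a * a) * (b * b)) * (a * c) + ((a * a) * c) * (a * (b * b)) - (a * a) * ((b * b) * (a * c)) - a * ((b * b) * ((a * a) * c)) - c * ((b * b) * ((a * a) * a))) = 0 := jordanT (Φ := Φ) a c (a * a) (b * b)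
  have h138 : (((a * a) * a) * ((b * c) * b) + ((a * a) * (b * c)) * (a * b) + ((a * a) * b) * (a * (b * c)) - (a * a) * ((b * c) * (a * b)) - a * ((b * c) * ((a * a) * b)) - b * ((b * c) * ((a * a) * a))) = 0 := jordanT (Φ := Φ) a b (a * a) (b * c)
  have h139 : (((b * c) * a) * (b * (a * a)) + ((b * c) * b) * (a * (a * a)) + ((b * c) * (a * a)) * (a * b) - (b * c) * (b * (a * (a * a))) - a * (b * ((b * c) * (a * a))) - (a * a) * (b * ((b * c) * a))) = 0 := jordanT (Φ := Φ) a (a * a) (b * c) b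
  have h140 : (((b * b) * a) * (c * (a * a)) + ((b * b) * c) * (a * (a * a)) + ((b * b) * (a * a)) * (a * c) - (b * b) * (c * (a * (a * a))) - a * (c * ((b * b) * (a * a))) - (a * a) * (c * ((b * b) * a))) = 0 := jordanT (Φ := Φ) a (a * a) (b * b) c
  have h141 : (((a * c) * a) * ((b * b) * a) + ((a * c) * (b * b)) * (a * a) + ((a * c) * a) * (a * (b * b)) - (a * c) * ((b * b) * (a * a)) - a * ((b * b) * ((a * c) * a)) - a * ((b * b) * ((a * c) * a))) = 0 := jordanT (Φ := Φ) a a (a * c) (b * b)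
  have h142 : (((a * b) * a) * ((b * c) * a) + ((a * b) * (b * c)) * (a * a) + ((a * b) * a) * (a * (b * c)) - (a * b) * ((b * c) * (a * a)) - a * ((b * c) * ((a * b) * a)) - a * ((b * c) * ((a * b) * a))) = 0 := jordanT (Φ := Φ) a a (a * b) (b * c)
  have h143 : (((c * (a * b)) * a) * (b * a) + ((c * (a * b)) * b) * (a * a) + ((c * (a * b)) * a) * (a * b) - (c * (a * b)) * (b * (a * a)) - a * (b * ((c * (a * b)) * a)) - a * (b * ((c * (a * b)) * a))) = 0 := jordanT (Φ := Φ) a a (c * (a * b)) b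
  have h144 : (((a * c) * a) * (b * (a * b)) + ((a * c) * b) * (a * (a * b)) + ((a * c) * (a * b)) * (a * b) - (a * c) * (b * (a * (a * b))) - a * (b * ((a * c) * (a * b))) - (a * b) * (b * ((a * c) * a))) = 0 := jordanT (Φ := Φ) a (a * b) (a * c) b
  have key : (2:ℕ) • (jordanU (jordanU a b) c) - (2:ℕ) • (jordanU a (jordanU b (jordanU a c))) =
      (-12:ℤ) • ((a * (a * (b * (b * c)))) * (a * a) - a * ((a * (b * (b * c))) * (a * a))) +
      (6:ℤ) • ((a * (a * (c * (b * b)))) * (a * a) - a * ((a * (c * (b * b))) * (a * a))) +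
      (16:ℤ) • ((a * (b * (a * (b * c)))) * (a * a) - a * ((b * (a * (b * c))) * (a * a))) +
      (16:ℤ) • ((a * (b * (b * (a * c)))) * (a * a) - a * ((b * (b * (a * c))) * (a * a))) +
      (16:ℤ) • ((a * (b * (c * (a * b)))) * (a * a) - a * ((b * (c * (a * b))) * (a * a))) +
      (16:ℤ) • ((a * (c * (a * (b * b)))) * (a * a) - a * ((c * (a * (b * b))) * (a * a))) +
      (-24:ℤ) • ((a * ((a * b) * (b * c))) * (a * a) - a * (((a * b) * (b * c)) * (a * a))) +
      (-4:ℤ) • ((c * b) * ((a * (a * (a * a))) * b) + (c * (a * (a * (a * a)))) * (b * b) + (c * b) * (b * (a * (a * (a * a)))) - c * ((a * (a * (a * a))) * (b * b)) - b * ((a * (a * (a * a))) * (c * b)) - b * ((a * (a * (a * a))) * (c * b))) +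
      (6:ℤ) • ((c * b) * (((a * a) * (a * a)) * b) + (c * ((a * a) * (a * a))) * (b * b) + (c * b) * (b * ((a * a) * (a * a))) - c * (((a * a) * (a * a)) * (b * b)) - b * (((a * a) * (a * a)) * (c * b)) - b * (((a * a) * (a * a)) * (c * b))) +
      (16:ℤ) • ((c * a) * ((a * (a * (a * b))) * b) + (c * (a * (a * (a * b)))) * (a * b) + (c * b) * (a * (a * (a * (a * b)))) - c * ((a * (a * (a * b))) * (a * b)) - a * ((a * (a * (a * b))) * (c * b)) - b * ((a * (a * (a * b))) * (c * a))) +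
      (16:ℤ) • ((c * a) * (((a * a) * (a * b)) * b) + (c * ((a * a) * (a * b))) * (a * b) + (c * b) * (a * ((a * a) * (a * b))) - c * (((a * a) * (a * b)) * (a * b)) - a * (((a * a) * (a * b)) * (c * b)) - b * (((a * a) * (a * b)) * (c * a))) +
      (-4:ℤ) • (((a * b) * b) * ((a * (a * a)) * c) + ((a * b) * (a * (a * a))) * (b * c) + ((a * b) * c) * (b * (a * (a * a))) - (a * b) * ((a * (a * a)) * (b * c)) - b * ((a * (a * a)) * ((a * b) * c)) - c * ((a * (a * a)) * ((a * b) * b))) +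
      (4:ℤ) • (((a * a) * b) * ((a * (a * b)) * c) + ((a * a) * (a * (a * b))) * (b * c) + ((a * a) * c) * (b * (a * (a * b))) - (a * a) * ((a * (a * b)) * (b * c)) - b * ((a * (a * b)) * ((a * a) * c)) - c * ((a * (a * b)) * ((a * a) * b))) +
      (2:ℤ) • (((a * a) * b) * ((b * (a * a)) * c) + ((a * a) * (b * (a * a))) * (b * c) + ((a * a) * c) * (b * (b * (a * a))) - (a * a) * ((b * (a * a)) * (b * c)) - b * ((b * (a * a)) * ((a * a) * c)) - c * ((b * (a * a)) * ((a * a) * b))) +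
      (-16:ℤ) • (((a * (a * b)) * b) * ((a * a) * c) + ((a * (a * b)) * (a * a)) * (b * c) + ((a * (a * b)) * c) * (b * (a * a)) - (a * (a * b)) * ((a * a) * (b * c)) - b * ((a * a) * ((a * (a * b)) * c)) - c * ((a * a) * ((a * (a * b)) * b))) +
      (-6:ℤ) • (((b * b) * a) * ((a * (a * a)) * c) + ((b * b) * (a * (a * a))) * (a * c) + ((b * b) * c) * (a * (a * (a * a))) - (b * b) * ((a * (a * a)) * (a * c)) - a * ((a * (a * a)) * ((b * b) * c)) - c * ((a * (a * a)) * ((b * b) * a))) +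
      (2:ℤ) • (((b * b) * c) * ((a * a) * (a * a)) + ((b * b) * (a * a)) * (c * (a * a)) + ((b * b) * (a * a)) * (c * (a * a)) - (b * b) * ((a * a) * (c * (a * a))) - c * ((a * a) * ((b * b) * (a * a))) - (a * a) * ((a * a) * ((b * b) * c))) +
      (12:ℤ) • ((c * a) * ((a * (a * (b * b))) * a) + (c * (a * (a * (b * b)))) * (a * a) + (c * a) * (a * (a * (a * (b * b)))) - c * ((a * (a * (b * b))) * (a * a)) - a * ((a * (a * (b * b))) * (c * a)) - a * ((a * (a * (b * b))) * (c * a))) +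
      (16:ℤ) • ((c * a) * ((b * (a * (a * b))) * a) + (c * (b * (a * (a * b)))) * (a * a) + (c * a) * (a * (b * (a * (a * b)))) - c * ((b * (a * (a * b))) * (a * a)) - a * ((b * (a * (a * b))) * (c * a)) - a * ((b * (a * (a * b))) * (c * a))) +
      (-2:ℤ) • ((c * a) * (((a * a) * (b * b)) * a) + (c * ((a * a) * (b * b))) * (a * a) + (c * a) * (a * ((a * a) * (b * b))) - c * (((a * a) * (b * b)) * (a * a)) - a * (((a * a) * (b * b)) * (c * a)) - a * (((a * a) * (b * b)) * (c * a))) +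
      (-16:ℤ) • ((c * a) * (((a * b) * (a * b)) * a) + (c * ((a * b) * (a * b))) * (a * a) + (c * a) * (a * ((a * b) * (a * b))) - c * (((a * b) * (a * b)) * (a * a)) - a * (((a * b) * (a * b)) * (c * a)) - a * (((a * b) * (a * b)) * (c * a))) +
      (8:ℤ) • (((a * b) * a) * ((a * (a * b)) * c) + ((a * b) * (a * (a * b))) * (a * c) + ((a * b) * c) * (a * (a * (a * b))) - (a * b) * ((a * (a * b)) * (a * c)) - a * ((a * (a * b)) * ((a * b) * c)) - c * ((a * (a * b)) * ((a * b) * a))) +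
      (-12:ℤ) • (((a * b) * a) * ((b * (a * a)) * c) + ((a * b) * (b * (a * a))) * (a * c) + ((a * b) * c) * (a * (b * (a * a))) - (a * b) * ((b * (a * a)) * (a * c)) - a * ((b * (a * a)) * ((a * b) * c)) - c * ((b * (a * a)) * ((a * b) * a))) +
      (-12:ℤ) • (((a * (b * b)) * a) * ((a * a) * c) + ((a * (b * b)) * (a * a)) * (a * c) + ((a * (b * b)) * c) * (a * (a * a)) - (a * (b * b)) * ((a * a) * (a * c)) - a * ((a * a) * ((a * (b * b)) * c)) - c * ((a * a) * ((a * (b * b)) * a))) +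
      (6:ℤ) • (((a * a) * a) * ((a * (b * b)) * c) + ((a * a) * (a * (b * b))) * (a * c) + ((a * a) * c) * (a * (a * (b * b))) - (a * a) * ((a * (b * b)) * (a * c)) - a * ((a * (b * b)) * ((a * a) * c)) - c * ((a * (b * b)) * ((a * a) * a))) +
      (4:ℤ) • (((a * a) * a) * ((b * (a * b)) * c) + ((a * a) * (b * (a * b))) * (a * c) + ((a * a) * c) * (a * (b * (a * b))) - (a * a) * ((b * (a * b)) * (a * c)) - a * ((b * (a * b)) * ((a * a) * c)) - c * ((b * (a * b)) * ((a * a) * a))) +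
      (-16:ℤ) • (((a * (a * b)) * a) * ((a * b) * c) + ((a * (a * b)) * (a * b)) * (a * c) + ((a * (a * b)) * c) * (a * (a * b)) - (a * (a * b)) * ((a * b) * (a * c)) - a * ((a * b) * ((a * (a * b)) * c)) - c * ((a * b) * ((a * (a * b)) * a))) +
      (4:ℤ) • (((a * (a * a)) * a) * ((b * b) * c) + ((a * (a * a)) * (b * b)) * (a * c) + ((a * (a * a)) * c) * (a * (b * b)) - (a * (a * a)) * ((b * b) * (a * c)) - a * ((b * b) * ((a * (a * a)) * c)) - c * ((b * b) * ((a * (a * a)) * a))) +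
      (16:ℤ) • (((a * b) * c) * ((a * a) * (a * b)) + ((a * b) * (a * a)) * (c * (a * b)) + ((a * b) * (a * b)) * (c * (a * a)) - (a * b) * ((a * a) * (c * (a * b))) - c * ((a * a) * ((a * b) * (a * b))) - (a * b) * ((a * a) * ((a * b) * c))) +
      (-16:ℤ) • (((a * b) * c) * ((a * b) * (a * a)) + ((a * b) * (a * b)) * (c * (a * a)) + ((a * b) * (a * a)) * (c * (a * b)) - (a * b) * ((a * b) * (c * (a * a))) - c * ((a * b) * ((a * b) * (a * a))) - (a * a) * ((a * b) * ((a * b) * c))) +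
      (-6:ℤ) • (((a * a) * c) * ((b * b) * (a * a)) + ((a * a) * (b * b)) * (c * (a * a)) + ((a * a) * (a * a)) * (c * (b * b)) - (a * a) * ((b * b) * (c * (a * a))) - c * ((b * b) * ((a * a) * (a * a))) - (a * a) * ((b * b) * ((a * a) * c))) +
      (8:ℤ) • ((b * a) * (((a * a) * (a * c)) * b) + (b * ((a * a) * (a * c))) * (a * b) + (b * b) * (a * ((a * a) * (a * c))) - b * (((a * a) * (a * c)) * (a * b)) - a * (((a * a) * (a * c)) * (b * b)) - b * (((a * a) * (a * c)) * (b * a))) +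
      (-6:ℤ) • (((a * c) * b) * ((a * (a * a)) * b) + ((a * c) * (a * (a * a))) * (b * b) + ((a * c) * b) * (b * (a * (a * a))) - (a * c) * ((a * (a * a)) * (b * b)) - b * ((a * (a * a)) * ((a * c) * b)) - b * ((a * (a * a)) * ((a * c) * b))) +
      (6:ℤ) • (((a * a) * b) * ((a * (a * c)) * b) + ((a * a) * (a * (a * c))) * (b * b) + ((a * a) * b) * (b * (a * (a * c))) - (a * a) * ((a * (a * c)) * (b * b)) - b * ((a * (a * c)) * ((a * a) * b)) - b * ((a * (a * c)) * ((a * a) * b))) +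
      (-1:ℤ) • (((a * a) * b) * ((c * (a * a)) * b) + ((a * a) * (c * (a * a))) * (b * b) + ((a * a) * b) * (b * (c * (a * a))) - (a * a) * ((c * (a * a)) * (b * b)) - b * ((c * (a * a)) * ((a * a) * b)) - b * ((c * (a * a)) * ((a * a) * b))) +
      (-8:ℤ) • (((a * (a * c)) * b) * ((a * a) * b) + ((a * (a * c)) * (a * a)) * (b * b) + ((a * (a * c)) * b) * (b * (a * a)) - (a * (a * c)) * ((a * a) * (b * b)) - b * ((a * a) * ((a * (a * c)) * b)) - b * ((a * a) * ((a * (a * c)) * b))) +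
      (-4:ℤ) • (((b * c) * a) * ((a * (a * a)) * b) + ((b * c) * (a * (a * a))) * (a * b) + ((b * c) * b) * (a * (a * (a * a))) - (b * c) * ((a * (a * a)) * (a * b)) - a * ((a * (a * a)) * ((b * c) * b)) - b * ((a * (a * a)) * ((b * c) * a))) +
      (4:ℤ) • (((b * c) * b) * ((a * a) * (a * a)) + ((b * c) * (a * a)) * (b * (a * a)) + ((b * c) * (a * a)) * (b * (a * a)) - (b * c) * ((a * a) * (b * (a * a))) - b * ((a * a) * ((b * c) * (a * a))) - (a * a) * ((a * a) * ((b * c) * b))) +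
      (8:ℤ) • ((b * a) * ((a * (a * (b * c))) * a) + (b * (a * (a * (b * c)))) * (a * a) + (b * a) * (a * (a * (a * (b * c)))) - b * ((a * (a * (b * c))) * (a * a)) - a * ((a * (a * (b * c))) * (b * a)) - a * ((a * (a * (b * c))) * (b * a))) +
      (16:ℤ) • ((b * a) * ((a * (b * (a * c))) * a) + (b * (a * (b * (a * c)))) * (a * a) + (b * a) * (a * (a * (b * (a * c)))) - b * ((a * (b * (a * c))) * (a * a)) - a * ((a * (b * (a * c))) * (b * a)) - a * ((a * (b * (a * c))) * (b * a))) +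
      (8:ℤ) • ((b * a) * ((a * (c * (a * b))) * a) + (b * (a * (c * (a * b)))) * (a * a) + (b * a) * (a * (a * (c * (a * b)))) - b * ((a * (c * (a * b))) * (a * a)) - a * ((a * (c * (a * b))) * (b * a)) - a * ((a * (c * (a * b))) * (b * a))) +
      (16:ℤ) • ((b * a) * ((b * (a * (a * c))) * a) + (b * (b * (a * (a * c)))) * (a * a) + (b * a) * (a * (b * (a * (a * c)))) - b * ((b * (a * (a * c))) * (a * a)) - a * ((b * (a * (a * c))) * (b * a)) - a * ((b * (a * (a * c))) * (b * a))) +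
      (16:ℤ) • ((b * a) * ((c * (a * (a * b))) * a) + (b * (c * (a * (a * b)))) * (a * a) + (b * a) * (a * (c * (a * (a * b)))) - b * ((c * (a * (a * b))) * (a * a)) - a * ((c * (a * (a * b))) * (b * a)) - a * ((c * (a * (a * b))) * (b * a))) +
      (-4:ℤ) • ((b * a) * (((a * a) * (b * c)) * a) + (b * ((a * a) * (b * c))) * (a * a) + (b * a) * (a * ((a * a) * (b * c))) - b * (((a * a) * (b * c)) * (a * a)) - a * (((a * a) * (b * c)) * (b * a)) - a * (((a * a) * (b * c)) * (b * a))) +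
      (-32:ℤ) • ((b * a) * (((a * b) * (a * c)) * a) + (b * ((a * b) * (a * c))) * (a * a) + (b * a) * (a * ((a * b) * (a * c))) - b * (((a * b) * (a * c)) * (a * a)) - a * (((a * b) * (a * c)) * (b * a)) - a * (((a * b) * (a * c)) * (b * a))) +
      (24:ℤ) • (((a * c) * a) * ((a * (a * b)) * b) + ((a * c) * (a * (a * b))) * (a * b) + ((a * c) * b) * (a * (a * (a * b))) - (a * c) * ((a * (a * b)) * (a * b)) - a * ((a * (a * b)) * ((a * c) * b)) - b * ((a * (a * b)) * ((a * c) * a))) +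
      (-12:ℤ) • (((a * c) * a) * ((b * (a * a)) * b) + ((a * c) * (b * (a * a))) * (a * b) + ((a * c) * b) * (a * (b * (a * a))) - (a * c) * ((b * (a * a)) * (a * b)) - a * ((b * (a * a)) * ((a * c) * b)) - b * ((b * (a * a)) * ((a * c) * a))) +
      (-24:ℤ) • (((a * b) * a) * ((a * (a * c)) * b) + ((a * b) * (a * (a * c))) * (a * b) + ((a * b) * b) * (a * (a * (a * c))) - (a * b) * ((a * (a * c)) * (a * b)) - a * ((a * (a * c)) * ((a * b) * b)) - b * ((a * (a * c)) * ((a * b) * a))) +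
      (-4:ℤ) • (((a * b) * a) * ((c * (a * a)) * b) + ((a * b) * (c * (a * a))) * (a * b) + ((a * b) * b) * (a * (c * (a * a))) - (a * b) * ((c * (a * a)) * (a * b)) - a * ((c * (a * a)) * ((a * b) * b)) - b * ((c * (a * a)) * ((a * b) * a))) +
      (-8:ℤ) • (((a * (b * c)) * a) * ((a * a) * b) + ((a * (b * c)) * (a * a)) * (a * b) + ((a * (b * c)) * b) * (a * (a * a)) - (a * (b * c)) * ((a * a) * (a * b)) - a * ((a * a) * ((a * (b * c)) * b)) - b * ((a * a) * ((a * (b * c)) * a))) +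
      (-16:ℤ) • (((b * (a * c)) * a) * ((a * a) * b) + ((b * (a * c)) * (a * a)) * (a * b) + ((b * (a * c)) * b) * (a * (a * a)) - (b * (a * c)) * ((a * a) * (a * b)) - a * ((a * a) * ((b * (a * c)) * b)) - b * ((a * a) * ((b * (a * c)) * a))) +
      (-8:ℤ) • (((c * (a * b)) * a) * ((a * a) * b) + ((c * (a * b)) * (a * a)) * (a * b) + ((c * (a * b)) * b) * (a * (a * a)) - (c * (a * b)) * ((a * a) * (a * b)) - a * ((a * a) * ((c * (a * b)) * b)) - b * ((a * a) * ((c * (a * b)) * a))) +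
      (4:ℤ) • (((a * a) * a) * ((a * (b * c)) * b) + ((a * a) * (a * (b * c))) * (a * b) + ((a * a) * b) * (a * (a * (b * c))) - (a * a) * ((a * (b * c)) * (a * b)) - a * ((a * (b * c)) * ((a * a) * b)) - b * ((a * (b * c)) * ((a * a) * a))) +
      (12:ℤ) • (((a * a) * a) * ((b * (a * c)) * b) + ((a * a) * (b * (a * c))) * (a * b) + ((a * a) * b) * (a * (b * (a * c))) - (a * a) * ((b * (a * c)) * (a * b)) - a * ((b * (a * c)) * ((a * a) * b)) - b * ((b * (a * c)) * ((a * a) * a))) +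
      (4:ℤ) • (((a * a) * a) * ((c * (a * b)) * b) + ((a * a) * (c * (a * b))) * (a * b) + ((a * a) * b) * (a * (c * (a * b))) - (a * a) * ((c * (a * b)) * (a * b)) - a * ((c * (a * b)) * ((a * a) * b)) - b * ((c * (a * b)) * ((a * a) * a))) +
      (-16:ℤ) • (((a * (a * b)) * a) * ((a * c) * b) + ((a * (a * b)) * (a * c)) * (a * b) + ((a * (a * b)) * b) * (a * (a * c)) - (a * (a * b)) * ((a * c) * (a * b)) - a * ((a * c) * ((a * (a * b)) * b)) - b * ((a * c) * ((a * (a * b)) * a))) +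
      (8:ℤ) • (((a * (a * a)) * a) * ((b * c) * b) + ((a * (a * a)) * (b * c)) * (a * b) + ((a * (a * a)) * b) * (a * (b * c)) - (a * (a * a)) * ((b * c) * (a * b)) - a * ((b * c) * ((a * (a * a)) * b)) - b * ((b * c) * ((a * (a * a)) * a))) +
      (32:ℤ) • (((a * c) * b) * ((a * a) * (a * b)) + ((a * c) * (a * a)) * (b * (a * b)) + ((a * c) * (a * b)) * (b * (a * a)) - (a * c) * ((a * a) * (b * (a * b))) - b * ((a * a) * ((a * c) * (a * b))) - (a * b) * ((a * a) * ((a * c) * b))) +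
      (-16:ℤ) • (((a * c) * b) * ((a * b) * (a * a)) + ((a * c) * (a * b)) * (b * (a * a)) + ((a * c) * (a * a)) * (b * (a * b)) - (a * c) * ((a * b) * (b * (a * a))) - b * ((a * b) * ((a * c) * (a * a))) - (a * a) * ((a * b) * ((a * c) * b))) +
      (-16:ℤ) • (((a * b) * b) * ((a * c) * (a * a)) + ((a * b) * (a * c)) * (b * (a * a)) + ((a * b) * (a * a)) * (b * (a * c)) - (a * b) * ((a * c) * (b * (a * a))) - b * ((a * c) * ((a * b) * (a * a))) - (a * a) * ((a * c) * ((a * b) * b))) +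
      (-12:ℤ) • (((a * a) * b) * ((b * c) * (a * a)) + ((a * a) * (b * c)) * (b * (a * a)) + ((a * a) * (a * a)) * (b * (b * c)) - (a * a) * ((b * c) * (b * (a * a))) - b * ((b * c) * ((a * a) * (a * a))) - (a * a) * ((b * c) * ((a * a) * b))) +
      (-20:ℤ) • (((b * c) * a) * ((a * (a * b)) * a) + ((b * c) * (a * (a * b))) * (a * a) + ((b * c) * a) * (a * (a * (a * b))) - (b * c) * ((a * (a * b)) * (a * a)) - a * ((a * (a * b)) * ((b * c) * a)) - a * ((a * (a * b)) * ((b * c) * a))) +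
      (-2:ℤ) • (((b * c) * a) * ((b * (a * a)) * a) + ((b * c) * (b * (a * a))) * (a * a) + ((b * c) * a) * (a * (b * (a * a))) - (b * c) * ((b * (a * a)) * (a * a)) - a * ((b * (a * a)) * ((b * c) * a)) - a * ((b * (a * a)) * ((b * c) * a))) +
      (8:ℤ) • (((b * c) * a) * ((a * a) * (a * b)) + ((b * c) * (a * a)) * (a * (a * b)) + ((b * c) * (a * b)) * (a * (a * a)) - (b * c) * ((a * a) * (a * (a * b))) - a * ((a * a) * ((b * c) * (a * b))) - (a * b) * ((a * a) * ((b * c) * a))) +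
      (16:ℤ) • (((a * (a * b)) * a) * (a * (b * c)) + ((a * (a * b)) * a) * (a * (b * c)) + ((a * (a * b)) * (b * c)) * (a * a) - (a * (a * b)) * (a * (a * (b * c))) - a * (a * ((a * (a * b)) * (b * c))) - (b * c) * (a * ((a * (a * b)) * a))) +
      (-8:ℤ) • (((a * (a * a)) * a) * (b * (b * c)) + ((a * (a * a)) * b) * (a * (b * c)) + ((a * (a * a)) * (b * c)) * (a * b) - (a * (a * a)) * (b * (a * (b * c))) - a * (b * ((a * (a * a)) * (b * c))) - (b * c) * (b * ((a * (a * a)) * a))) +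
      (16:ℤ) • (((b * c) * (a * a)) * (a * (a * b)) + ((b * c) * a) * ((a * a) * (a * b)) + ((b * c) * (a * b)) * ((a * a) * a) - (b * c) * (a * ((a * a) * (a * b))) - (a * a) * (a * ((b * c) * (a * b))) - (a * b) * (a * ((b * c) * (a * a)))) +
      (12:ℤ) • (((b * c) * (a * a)) * (b * (a * a)) + ((b * c) * b) * ((a * a) * (a * a)) + ((b * c) * (a * a)) * ((a * a) * b) - (b * c) * (b * ((a * a) * (a * a))) - (a * a) * (b * ((b * c) * (a * a))) - (a * a) * (b * ((b * c) * (a * a)))) +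
      (-2:ℤ) • (((b * b) * a) * ((a * (a * c)) * a) + ((b * b) * (a * (a * c))) * (a * a) + ((b * b) * a) * (a * (a * (a * c))) - (b * b) * ((a * (a * c)) * (a * a)) - a * ((a * (a * c)) * ((b * b) * a)) - a * ((a * (a * c)) * ((b * b) * a))) +
      (-3:ℤ) • (((b * b) * a) * ((c * (a * a)) * a) + ((b * b) * (c * (a * a))) * (a * a) + ((b * b) * a) * (a * (c * (a * a))) - (b * b) * ((c * (a * a)) * (a * a)) - a * ((c * (a * a)) * ((b * b) * a)) - a * ((c * (a * a)) * ((b * b) * a))) +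
      (-4:ℤ) • (((a * (a * a)) * a) * (c * (b * b)) + ((a * (a * a)) * c) * (a * (b * b)) + ((a * (a * a)) * (b * b)) * (a * c) - (a * (a * a)) * (c * (a * (b * b))) - a * (c * ((a * (a * a)) * (b * b))) - (b * b) * (c * ((a * (a * a)) * a))) +
      (8:ℤ) • (((b * b) * (a * a)) * (a * (a * c)) + ((b * b) * a) * ((a * a) * (a * c)) + ((b * b) * (a * c)) * ((a * a) * a) - (b * b) * (a * ((a * a) * (a * c))) - (a * a) * (a * ((b * b) * (a * c))) - (a * c) * (a * ((b * b) * (a * a)))) +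
      (6:ℤ) • (((b * b) * (a * a)) * (c * (a * a)) + ((b * b) * c) * ((a * a) * (a * a)) + ((b * b) * (a * a)) * ((a * a) * c) - (b * b) * (c * ((a * a) * (a * a))) - (a * a) * (c * ((b * b) * (a * a))) - (a * a) * (c * ((b * b) * (a * a)))) +
      (4:ℤ) • (((b * (b * c)) * a) * ((a * a) * a) + ((b * (b * c)) * (a * a)) * (a * a) + ((b * (b * c)) * a) * (a * (a * a)) - (b * (b * c)) * ((a * a) * (a * a)) - a * ((a * a) * ((b * (b * c)) * a)) - a * ((a * a) * ((b * (b * c)) * a))) +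
      (2:ℤ) • (((c * (b * b)) * a) * ((a * a) * a) + ((c * (b * b)) * (a * a)) * (a * a) + ((c * (b * b)) * a) * (a * (a * a)) - (c * (b * b)) * ((a * a) * (a * a)) - a * ((a * a) * ((c * (b * b)) * a)) - a * ((a * a) * ((c * (b * b)) * a))) +
      (-4:ℤ) • (((b * (b * c)) * a) * (a * (a * a)) + ((b * (b * c)) * a) * (a * (a * a)) + ((b * (b * c)) * (a * a)) * (a * a) - (b * (b * c)) * (a * (a * (a * a))) - a * (a * ((b * (b * c)) * (a * a))) - (a * a) * (a * ((b * (b * c)) * a))) +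
      (-6:ℤ) • (((c * (b * b)) * a) * (a * (a * a)) + ((c * (b * b)) * a) * (a * (a * a)) + ((c * (b * b)) * (a * a)) * (a * a) - (c * (b * b)) * (a * (a * (a * a))) - a * (a * ((c * (b * b)) * (a * a))) - (a * a) * (a * ((c * (b * b)) * a))) +
      (6:ℤ) • (((a * c) * a) * ((a * (b * b)) * a) + ((a * c) * (a * (b * b))) * (a * a) + ((a * c) * a) * (a * (a * (b * b))) - (a * c) * ((a * (b * b)) * (a * a)) - a * ((a * (b * b)) * ((a * c) * a)) - a * ((a * (b * b)) * ((a * c) * a))) +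
      (4:ℤ) • (((a * c) * a) * ((b * (a * b)) * a) + ((a * c) * (b * (a * b))) * (a * a) + ((a * c) * a) * (a * (b * (a * b))) - (a * c) * ((b * (a * b)) * (a * a)) - a * ((b * (a * b)) * ((a * c) * a)) - a * ((b * (a * b)) * ((a * c) * a))) +
      (12:ℤ) • (((a * b) * a) * ((a * (b * c)) * a) + ((a * b) * (a * (b * c))) * (a * a) + ((a * b) * a) * (a * (a * (b * c))) - (a * b) * ((a * (b * c)) * (a * a)) - a * ((a * (b * c)) * ((a * b) * a)) - a * ((a * (b * c)) * ((a * b) * a))) +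
      (-20:ℤ) • (((a * b) * a) * ((b * (a * c)) * a) + ((a * b) * (b * (a * c))) * (a * a) + ((a * b) * a) * (a * (b * (a * c))) - (a * b) * ((b * (a * c)) * (a * a)) - a * ((b * (a * c)) * ((a * b) * a)) - a * ((b * (a * c)) * ((a * b) * a))) +
      (-4:ℤ) • (((a * b) * a) * ((c * (a * b)) * a) + ((a * b) * (c * (a * b))) * (a * a) + ((a * b) * a) * (a * (c * (a * b))) - (a * b) * ((c * (a * b)) * (a * a)) - a * ((c * (a * b)) * ((a * b) * a)) - a * ((c * (a * b)) * ((a * b) * a))) +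
      (-16:ℤ) • (((b * (a * c)) * a) * ((a * b) * a) + ((b * (a * c)) * (a * b)) * (a * a) + ((b * (a * c)) * a) * (a * (a * b)) - (b * (a * c)) * ((a * b) * (a * a)) - a * ((a * b) * ((b * (a * c)) * a)) - a * ((a * b) * ((b * (a * c)) * a))) +
      (-12:ℤ) • (((a * (b * b)) * a) * ((a * c) * a) + ((a * (b * b)) * (a * c)) * (a * a) + ((a * (b * b)) * a) * (a * (a * c)) - (a * (b * b)) * ((a * c) * (a * a)) - a * ((a * c) * ((a * (b * b)) * a)) - a * ((a * c) * ((a * (b * b)) * a))) +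
      (8:ℤ) • (((b * (a * (b * c))) * a) * (a * a) + ((b * (a * (b * c))) * a) * (a * a) + ((b * (a * (b * c))) * a) * (a * a) - (b * (a * (b * c))) * (a * (a * a)) - a * (a * ((b * (a * (b * c))) * a)) - a * (a * ((b * (a * (b * c))) * a))) +
      (-8:ℤ) • (((b * (b * (a * c))) * a) * (a * a) + ((b * (b * (a * c))) * a) * (a * a) + ((b * (b * (a * c))) * a) * (a * a) - (b * (b * (a * c))) * (a * (a * a)) - a * (a * ((b * (b * (a * c))) * a)) - a * (a * ((b * (b * (a * c))) * a))) +
      (-4:ℤ) • ((((a * c) * (b * b)) * a) * (a * a) + (((a * c) * (b * b)) * a) * (a * a) + (((a * c) * (b * b)) * a) * (a * a) - ((a * c) * (b * b)) * (a * (a * a)) - a * (a * (((a * c) * (b * b)) * a)) - a * (a * (((a * c) * (b * b)) * a))) +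
      (2:ℤ) • (((a * a) * a) * ((b * (b * c)) * a) + ((a * a) * (b * (b * c))) * (a * a) + ((a * a) * a) * (a * (b * (b * c))) - (a * a) * ((b * (b * c)) * (a * a)) - a * ((b * (b * c)) * ((a * a) * a)) - a * ((b * (b * c)) * ((a * a) * a))) +
      (3:ℤ) • (((a * a) * a) * ((c * (b * b)) * a) + ((a * a) * (c * (b * b))) * (a * a) + ((a * a) * a) * (a * (c * (b * b))) - (a * a) * ((c * (b * b)) * (a * a)) - a * ((c * (b * b)) * ((a * a) * a)) - a * ((c * (b * b)) * ((a * a) * a))) +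
      (-8:ℤ) • (((a * (a * b)) * a) * ((b * c) * a) + ((a * (a * b)) * (b * c)) * (a * a) + ((a * (a * b)) * a) * (a * (b * c)) - (a * (a * b)) * ((b * c) * (a * a)) - a * ((b * c) * ((a * (a * b)) * a)) - a * ((b * c) * ((a * (a * b)) * a))) +
      (16:ℤ) • (((a * c) * a) * ((a * b) * (a * b)) + ((a * c) * (a * b)) * (a * (a * b)) + ((a * c) * (a * b)) * (a * (a * b)) - (a * c) * ((a * b) * (a * (a * b))) - a * ((a * b) * ((a * c) * (a * b))) - (a * b) * ((a * b) * ((a * c) * a))) +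
      (8:ℤ) • (((a * (b * b)) * a) * (a * (a * c)) + ((a * (b * b)) * a) * (a * (a * c)) + ((a * (b * b)) * (a * c)) * (a * a) - (a * (b * b)) * (a * (a * (a * c))) - a * (a * ((a * (b * b)) * (a * c))) - (a * c) * (a * ((a * (b * b)) * a))) +
      (-16:ℤ) • (((b * (a * b)) * a) * (a * (a * c)) + ((b * (a * b)) * a) * (a * (a * c)) + ((b * (a * b)) * (a * c)) * (a * a) - (b * (a * b)) * (a * (a * (a * c))) - a * (a * ((b * (a * b)) * (a * c))) - (a * c) * (a * ((b * (a * b)) * a))) +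
      (-8:ℤ) • (((a * c) * a) * ((b * b) * (a * a)) + ((a * c) * (b * b)) * (a * (a * a)) + ((a * c) * (a * a)) * (a * (b * b)) - (a * c) * ((b * b) * (a * (a * a))) - a * ((b * b) * ((a * c) * (a * a))) - (a * a) * ((b * b) * ((a * c) * a))) +
      (32:ℤ) • (((a * b) * a) * ((a * c) * (a * b)) + ((a * b) * (a * c)) * (a * (a * b)) + ((a * b) * (a * b)) * (a * (a * c)) - (a * b) * ((a * c) * (a * (a * b))) - a * ((a * c) * ((a * b) * (a * b))) - (a * b) * ((a * c) * ((a * b) * a))) +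
      (-16:ℤ) • (((a * (b * c)) * a) * (a * (a * b)) + ((a * (b * c)) * a) * (a * (a * b)) + ((a * (b * c)) * (a * b)) * (a * a) - (a * (b * c)) * (a * (a * (a * b))) - a * (a * ((a * (b * c)) * (a * b))) - (a * b) * (a * ((a * (b * c)) * a))) +
      (32:ℤ) • (((b * (a * c)) * a) * (a * (a * b)) + ((b * (a * c)) * a) * (a * (a * b)) + ((b * (a * c)) * (a * b)) * (a * a) - (b * (a * c)) * (a * (a * (a * b))) - a * (a * ((b * (a * c)) * (a * b))) - (a * b) * (a * ((b * (a * c)) * a))) +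
      (-16:ℤ) • (((a * b) * a) * ((b * c) * (a * a)) + ((a * b) * (b * c)) * (a * (a * a)) + ((a * b) * (a * a)) * (a * (b * c)) - (a * b) * ((b * c) * (a * (a * a))) - a * ((b * c) * ((a * b) * (a * a))) - (a * a) * ((b * c) * ((a * b) * a))) +
      (-32:ℤ) • (((a * c) * (a * b)) * (a * (a * b)) + ((a * c) * a) * ((a * b) * (a * b)) + ((a * c) * (a * b)) * ((a * b) * a) - (a * c) * (a * ((a * b) * (a * b))) - (a * b) * (a * ((a * c) * (a * b))) - (a * b) * (a * ((a * c) * (a * b)))) +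
      (16:ℤ) • (((a * c) * (a * a)) * (b * (a * b)) + ((a * c) * b) * ((a * a) * (a * b)) + ((a * c) * (a * b)) * ((a * a) * b) - (a * c) * (b * ((a * a) * (a * b))) - (a * a) * (b * ((a * c) * (a * b))) - (a * b) * (b * ((a * c) * (a * a)))) +
      (8:ℤ) • (((a * b) * (a * a)) * (c * (a * b)) + ((a * b) * c) * ((a * a) * (a * b)) + ((a * b) * (a * b)) * ((a * a) * c) - (a * b) * (c * ((a * a) * (a * b))) - (a * a) * (c * ((a * b) * (a * b))) - (a * b) * (c * ((a * b) * (a * a)))) +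
      (-2:ℤ) • ((a * (a * a)) * ((c * b) * (a * b) + (c * a) * (b * b) + (c * b) * (b * a) - c * (a * (b * b)) - b * (a * (c * b)) - b * (a * (c * b)))) +
      (4:ℤ) • ((a * (a * a)) * ((c * a) * (b * b) + (c * b) * (a * b) + (c * b) * (a * b) - c * (b * (a * b)) - a * (b * (c * b)) - b * (b * (c * a)))) +
      (-2:ℤ) • ((a * (a * a)) * ((b * a) * (c * b) + (b * c) * (a * b) + (b * b) * (a * c) - b * (c * (a * b)) - a * (c * (b * b)) - b * (c * (b * a)))) +
      (-24:ℤ) • ((a * (a * b)) * ((c * a) * (a * b) + (c * a) * (a * b) + (c * b) * (a * a) - c * (a * (a * b)) - a * (a * (c * b)) - b * (a * (c * a)))) +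
      (-4:ℤ) • ((b * (a * a)) * ((c * a) * (a * b) + (c * a) * (a * b) + (c * b) * (a * a) - c * (a * (a * b)) - a * (a * (c * b)) - b * (a * (c * a)))) +
      (-4:ℤ) • ((a * (a * b)) * ((c * a) * (b * a) + (c * b) * (a * a) + (c * a) * (a * b) - c * (b * (a * a)) - a * (b * (c * a)) - a * (b * (c * a)))) +
      (-2:ℤ) • ((b * (a * a)) * ((c * a) * (b * a) + (c * b) * (a * a) + (c * a) * (a * b) - c * (b * (a * a)) - a * (b * (c * a)) - a * (b * (c * a)))) +
      (-4:ℤ) • ((a * (a * b)) * ((b * a) * (c * a) + (b * c) * (a * a) + (b * a) * (a * c) - b * (c * (a * a)) - a * (c * (b * a)) - a * (c * (b * a)))) +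
      (-2:ℤ) • ((b * (a * a)) * ((b * a) * (c * a) + (b * c) * (a * a) + (b * a) * (a * c) - b * (c * (a * a)) - a * (c * (b * a)) - a * (c * (b * a)))) +
      (4:ℤ) • ((a * (a * c)) * ((b * a) * (a * b) + (b * a) * (a * b) + (b * b) * (a * a) - b * (a * (a * b)) - a * (a * (b * b)) - b * (a * (b * a)))) +
      (-6:ℤ) • ((c * (a * a)) * ((b * a) * (a * b) + (b * a) * (a * b) + (b * b) * (a * a) - b * (a * (a * b)) - a * (a * (b * b)) - b * (a * (b * a)))) +
      (-12:ℤ) • ((a * (a * c)) * ((b * a) * (b * a) + (b * b) * (a * a) + (b * a) * (a * b) - b * (b * (a * a)) - a * (b * (b * a)) - a * (b * (b * a)))) +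
      (2:ℤ) • ((c * (a * a)) * ((b * a) * (b * a) + (b * b) * (a * a) + (b * a) * (a * b) - b * (b * (a * a)) - a * (b * (b * a)) - a * (b * (b * a)))) +
      (-24:ℤ) • ((a * a) * ((c * a) * ((a * b) * b) + (c * (a * b)) * (a * b) + (c * b) * (a * (a * b)) - c * ((a * b) * (a * b)) - a * ((a * b) * (c * b)) - b * ((a * b) * (c * a)))) +
      (12:ℤ) • ((a * a) * (((b * b) * a) * (a * c) + ((b * b) * a) * (a * c) + ((b * b) * c) * (a * a) - (b * b) * (a * (a * c)) - a * (a * ((b * b) * c)) - c * (a * ((b * b) * a)))) +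
      (-14:ℤ) • ((a * a) * ((c * a) * ((b * b) * a) + (c * (b * b)) * (a * a) + (c * a) * (a * (b * b)) - c * ((b * b) * (a * a)) - a * ((b * b) * (c * a)) - a * ((b * b) * (c * a)))) +
      (16:ℤ) • ((a * a) * (((a * b) * a) * (b * c) + ((a * b) * b) * (a * c) + ((a * b) * c) * (a * b) - (a * b) * (b * (a * c)) - a * (b * ((a * b) * c)) - c * (b * ((a * b) * a)))) +
      (-8:ℤ) • ((a * a) * ((b * a) * ((a * c) * b) + (b * (a * c)) * (a * b) + (b * b) * (a * (a * c)) - b * ((a * c) * (a * b)) - a * ((a * c) * (b * b)) - b * ((a * c) * (b * a)))) +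
      (8:ℤ) • ((a * a) * (((a * c) * b) * (a * b) + ((a * c) * a) * (b * b) + ((a * c) * b) * (b * a) - (a * c) * (a * (b * b)) - b * (a * ((a * c) * b)) - b * (a * ((a * c) * b)))) +
      (8:ℤ) • ((a * a) * (((b * c) * a) * (a * b) + ((b * c) * a) * (a * b) + ((b * c) * b) * (a * a) - (b * c) * (a * (a * b)) - a * (a * ((b * c) * b)) - b * (a * ((b * c) * a)))) +
      (-24:ℤ) • ((a * a) * ((b * a) * ((b * c) * a) + (b * (b * c)) * (a * a) + (b * a) * (a * (b * c)) - b * ((b * c) * (a * a)) - a * ((b * c) * (b * a)) - a * ((b * c) * (b * a)))) +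
      (8:ℤ) • ((a * a) * (((a * c) * a) * (b * b) + ((a * c) * b) * (a * b) + ((a * c) * b) * (a * b) - (a * c) * (b * (a * b)) - a * (b * ((a * c) * b)) - b * (b * ((a * c) * a)))) +
      (16:ℤ) • ((a * a) * (((a * b) * a) * (c * b) + ((a * b) * c) * (a * b) + ((a * b) * b) * (a * c) - (a * b) * (c * (a * b)) - a * (c * ((a * b) * b)) - b * (c * ((a * b) * a)))) +
      (20:ℤ) • ((a * a) * (((b * c) * a) * (b * a) + ((b * c) * b) * (a * a) + ((b * c) * a) * (a * b) - (b * c) * (b * (a * a)) - a * (b * ((b * c) * a)) - a * (b * ((b * c) * a)))) +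
      (8:ℤ) • ((a * a) * (((b * b) * a) * (c * a) + ((b * b) * c) * (a * a) + ((b * b) * a) * (a * c) - (b * b) * (c * (a * a)) - a * (c * ((b * b) * a)) - a * (c * ((b * b) * a)))) +
      (-6:ℤ) • ((a * (b * b)) * ((a * c) * (a * a) - a * (c * (a * a)))) +
      (-4:ℤ) • ((b * (a * b)) * ((a * c) * (a * a) - a * (c * (a * a)))) +
      (-6:ℤ) • ((a * (b * b)) * ((c * a) * (a * a) + (c * a) * (a * a) + (c * a) * (a * a) - c * (a * (a * a)) - a * (a * (c * a)) - a * (a * (c * a)))) +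
      (-4:ℤ) • ((b * (a * b)) * ((c * a) * (a * a) + (c * a) * (a * a) + (c * a) * (a * a) - c * (a * (a * a)) - a * (a * (c * a)) - a * (a * (c * a)))) +
      (-4:ℤ) • ((a * (b * c)) * ((a * b) * (a * a) - a * (b * (a * a)))) +
      (-12:ℤ) • ((b * (a * c)) * ((a * b) * (a * a) - a * (b * (a * a)))) +
      (-12:ℤ) • ((c * (a * b)) * ((a * b) * (a * a) - a * (b * (a * a)))) +
      (-4:ℤ) • ((a * (b * c)) * ((b * a) * (a * a) + (b * a) * (a * a) + (b * a) * (a * a) - b * (a * (a * a)) - a * (a * (b * a)) - a * (a * (b * a)))) +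
      (-12:ℤ) • ((b * (a * c)) * ((b * a) * (a * a) + (b * a) * (a * a) + (b * a) * (a * a) - b * (a * (a * a)) - a * (a * (b * a)) - a * (a * (b * a)))) +
      (-4:ℤ) • ((c * (a * b)) * ((b * a) * (a * a) + (b * a) * (a * a) + (b * a) * (a * a) - b * (a * (a * a)) - a * (a * (b * a)) - a * (a * (b * a)))) +
      (-24:ℤ) • ((a * b) * ((a * (b * c)) * (a * a) - a * ((b * c) * (a * a)))) +
      (16:ℤ) • ((a * b) * (((a * b) * a) * (a * c) + ((a * b) * a) * (a * c) + ((a * b) * c) * (a * a) - (a * b) * (a * (a * c)) - a * (a * ((a * b) * c)) - c * (a * ((a * b) * a)))) +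
      (16:ℤ) • ((a * b) * (((b * c) * a) * (a * a) + ((b * c) * a) * (a * a) + ((b * c) * a) * (a * a) - (b * c) * (a * (a * a)) - a * (a * ((b * c) * a)) - a * (a * ((b * c) * a)))) +
      (16:ℤ) • ((a * b) * (((a * c) * a) * (b * a) + ((a * c) * b) * (a * a) + ((a * c) * a) * (a * b) - (a * c) * (b * (a * a)) - a * (b * ((a * c) * a)) - a * (b * ((a * c) * a)))) +
      (16:ℤ) • ((a * b) * (((a * b) * a) * (c * a) + ((a * b) * c) * (a * a) + ((a * b) * a) * (a * c) - (a * b) * (c * (a * a)) - a * (c * ((a * b) * a)) - a * (c * ((a * b) * a)))) +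
      (-12:ℤ) • ((a * c) * ((a * (b * b)) * (a * a) - a * ((b * b) * (a * a)))) +
      (16:ℤ) • ((a * c) * (((a * b) * a) * (a * b) + ((a * b) * a) * (a * b) + ((a * b) * b) * (a * a) - (a * b) * (a * (a * b)) - a * (a * ((a * b) * b)) - b * (a * ((a * b) * a)))) +
      (8:ℤ) • ((a * c) * (((b * b) * a) * (a * a) + ((b * b) * a) * (a * a) + ((b * b) * a) * (a * a) - (b * b) * (a * (a * a)) - a * (a * ((b * b) * a)) - a * (a * ((b * b) * a)))) +
      (16:ℤ) • ((a * c) * (((a * b) * a) * (b * a) + ((a * b) * b) * (a * a) + ((a * b) * a) * (a * b) - (a * b) * (b * (a * a)) - a * (b * ((a * b) * a)) - a * (b * ((a * b) * a)))) +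
      (-4:ℤ) • (a * ((a * (b * (b * c))) * (a * a) - a * ((b * (b * c)) * (a * a)))) +
      (10:ℤ) • (a * ((a * (c * (b * b))) * (a * a) - a * ((c * (b * b)) * (a * a)))) +
      (4:ℤ) • (a * (((a * a) * a) * ((b * b) * c) + ((a * a) * (b * b)) * (a * c) + ((a * a) * c) * (a * (b * b)) - (a * a) * ((b * b) * (a * c)) - a * ((b * b) * ((a * a) * c)) - c * ((b * b) * ((a * a) * a)))) +
      (8:ℤ) • (a * (((a * a) * a) * ((b * c) * b) + ((a * a) * (b * c)) * (a * b) + ((a * a) * b) * (a * (b * c)) - (a * a) * ((b * c) * (a * b)) - a * ((b * c) * ((a * a) * b)) - b * ((b * c) * ((a * a) * a)))) +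
      (-8:ℤ) • (a * (((b * c) * a) * (b * (a * a)) + ((b * c) * b) * (a * (a * a)) + ((b * c) * (a * a)) * (a * b) - (b * c) * (b * (a * (a * a))) - a * (b * ((b * c) * (a * a))) - (a * a) * (b * ((b * c) * a)))) +
      (-4:ℤ) • (a * (((b * b) * a) * (c * (a * a)) + ((b * b) * c) * (a * (a * a)) + ((b * b) * (a * a)) * (a * c) - (b * b) * (c * (a * (a * a))) - a * (c * ((b * b) * (a * a))) - (a * a) * (c * ((b * b) * a)))) +
      (4:ℤ) • (a * (((a * c) * a) * ((b * b) * a) + ((a * c) * (b * b)) * (a * a) + ((a * c) * a) * (a * (b * b)) - (a * c) * ((b * b) * (a * a)) - a * ((b * b) * ((a * c) * a)) - a * ((b * b) * ((a * c) * a)))) +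
      (-8:ℤ) • (a * (((a * b) * a) * ((b * c) * a) + ((a * b) * (b * c)) * (a * a) + ((a * b) * a) * (a * (b * c)) - (a * b) * ((b * c) * (a * a)) - a * ((b * c) * ((a * b) * a)) - a * ((b * c) * ((a * b) * a)))) +
      (8:ℤ) • (a * (((c * (a * b)) * a) * (b * a) + ((c * (a * b)) * b) * (a * a) + ((c * (a * b)) * a) * (a * b) - (c * (a * b)) * (b * (a * a)) - a * (b * ((c * (a * b)) * a)) - a * (b * ((c * (a * b)) * a)))) +
      (-16:ℤ) • (a * (((a * c) * a) * (b * (a * b)) + ((a * c) * b) * (a * (a * b)) + ((a * c) * (a * b)) * (a * b) - (a * c) * (b * (a * (a * b))) - a * (b * ((a * c) * (a * b))) - (a * b) * (b * ((a * c) * a)))) +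
      (-16:ℤ) • ((a * a) * (a * ((c * a) * (b * b) + (c * b) * (a * b) + (c * b) * (a * b) - c * (b * (a * b)) - a * (b * (c * b)) - b * (b * (c * a))))) +
      (-16:ℤ) • (a * ((a * b) * ((c * a) * (a * b) + (c * a) * (a * b) + (c * b) * (a * a) - c * (a * (a * b)) - a * (a * (c * b)) - b * (a * (c * a))))) +
      (4:ℤ) • ((a * a) * (b * ((b * a) * (c * a) + (b * c) * (a * a) + (b * a) * (a * c) - b * (c * (a * a)) - a * (c * (b * a)) - a * (c * (b * a))))) +
      (4:ℤ) • (a * (a * ((c * a) * ((b * b) * a) + (c * (b * b)) * (a * a) + (c * a) * (a * (b * b)) - c * ((b * b) * (a * a)) - a * ((b * b) * (c * a)) - a * ((b * b) * (c * a))))) +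
      (16:ℤ) • (a * (a * (((a * c) * a) * (b * b) + ((a * c) * b) * (a * b) + ((a * c) * b) * (a * b) - (a * c) * (b * (a * b)) - a * (b * ((a * c) * b)) - b * (b * ((a * c) * a))))) +
      (-8:ℤ) • (a * (a * (((b * c) * a) * (b * a) + ((b * c) * b) * (a * a) + ((b * c) * a) * (a * b) - (b * c) * (b * (a * a)) - a * (b * ((b * c) * a)) - a * (b * ((b * c) * a))))) +
      (-8:ℤ) • (a * (a * (b * ((b * a) * (c * a) + (b * c) * (a * a) + (b * a) * (a * c) - b * (c * (a * a)) - a * (c * (b * a)) - a * (c * (b * a)))))) := by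
    simp only [jordanU, two_smul]
    simp only [mul_add, add_mul, mul_sub, sub_mul]
    simp only [mul_comm]
    abel
  rw [h1, h2, h3, h4, h5, h6, h7, h8, h9, h10, h11, h12, h13, h14, h15, h16, h17, h18, h19, h20, h21, h22, h23, h24, h25, h26, h27, h28, h29, h30, h31, h32, h33, h34, h35, h36, h37, h38, h39, h40, h41, h42, h43, h44, h45, h46, h47, h48, h49, h50, h51, h52, h53, h54, h55, h56, h57, h58, h59, h60, h61, h62, h63, h64, h65, h66, h67, h68, h69, h70, h71, h72, h73, h74, h75, h76, h77, h78, h79, h80, h81, h82, h83, h84, h85, h86, h87, h88, h89, h90, h91, h92, h93, h94, h95, h96, h97, h98, h99, h100, h101, h102, h103, h104, h105, h106, h107, h108, h109, h110, h111, h112, h113, h114, h115, h116, h117, h118, h119, h120, h121, h122, h123, h124, h125, h126, h127, h128, h129, h130, h131, h132, h133, h134, h135, h136, h137, h138, h139, h140, h141, h142, h143, h144] at key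
  simp only [mul_zero, smul_zero, add_zero, zero_add] at key
  exact sub_eq_zero.mp key

/-- Let `J` be a linear Jordan algebra over a ring of scalars `Φ` containing `1/2`, in
which every element is von Neumann regular (`a ∈ U_a J`).  If `J` is a domain
(`U_a b = 0` forces `a = 0` or `b = 0`), then every nonzero `a ∈ J` is invertible,
i.e. the operator `U_a` is bijective. -/
theorem regular_domain_jordan_is_division {Φ J : Type*} [CommRing Φ] [Invertible (2 : Φ)]
    [NonUnitalNonAssocCommRing J] [IsCommJordan J]
    [Module Φ J] [IsScalarTower Φ J J] [SMulCommClass Φ J J]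
    (hreg : ∀ a : J, ∃ y : J, jordanU a y = a)
    (hdom : ∀ a b : J, jordanU a b = 0 → a = 0 ∨ b = 0) :
    ∀ a : J, a ≠ 0 → Function.Bijective (jordanU a) := by
  have hinj : ∀ a : J, a ≠ 0 → Function.Injective (jordanU a) := by
    intro a ha x y hxy
    have h0 : jordanU a (x - y) = 0 := by rw [← jordanU_sub, hxy, sub_self]
    rcases hdom _ _ h0 with h | h
    · exact absurd h ha
    · exact sub_eq_zero.mp h
  intro a ha
  obtain ⟨y, hy⟩ := hreg a
  have hy0 : y ≠ 0 := by
    rintro rfl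
    rw [jordanU_zero] at hy
    exact ha hy.symm
  have hya : ∀ c : J, jordanU y (jordanU a c) = c := by
    intro c
    have h1 : jordanU a (jordanU y (jordanU a c)) = jordanU a c := by
      rw [← fund (Φ := Φ), hy]
    have h2 : jordanU a (jordanU y (jordanU a c)) - jordanU a c = 0 := by rw [h1, sub_self]
    rw [jordanU_sub] at h2
    rcases hdom _ _ h2 with h | h
    · exact absurd h ha
    · exact sub_eq_zero.mp h
  constructor
  · exact hinj a ha
  · intro d
    refine ⟨jordanU y d, ?_⟩
    exact hinj y hy0 (hya (jordanU y d))
end
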